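/- arXiv:2402.01949 — 5 statements merged into one kernel-verified Lean document; each statement's English description precedes it below -/
import Mathlib

section
/- Let (X, ρ) be a metric space, and let {A_n} and A be closed subsets of X such that the Hausdorff distance δ_H(A_n, A) is finite for each n and tends to 0 as n → ∞. If X is separable, then there exists a sequence of Borel measurable maps I_n : A_n → A such that sup_{x ∈ A_n} ρ(I_n(x), x) → 0 as n → ∞. -/
/-!
Fix `n` and a radius `δₙ` slightly larger than `δ_H(Aₙ, A)`, so that `Aₙ` lies in the open
`δₙ`-neighbourhood of `A`. A sequence `(yₖ)` dense in `A` (it exists by separability) then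
covers that neighbourhood by the balls `B(yₖ, δₙ)`, and sending `x` to `yₖ` for the least `k`
with `x ∈ B(yₖ, δₙ)` is Borel, as it is constant on each of the countably many Borel pieces.
Since `δₙ → 0`, these maps approximate the identity uniformly.
-/

open Metric MeasureTheory Filter Topology Set

section PseudoMetric

variable {X : Type*} [PseudoMetricSpace X]

theorem Metric.subset_thickening_of_hausdorffDist_lt {s t : Set X} {δ : ℝ}
    (hfin : hausdorffEDist s t ≠ ⊤) (hδ : hausdorffDist s t < δ) :
    s ⊆ thickening δ t := fun _ hx =>
  mem_thickening_iff.2 (exists_dist_lt_of_hausdorffDist_lt hx hδ hfin)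

theorem TopologicalSpace.IsSeparable.exists_seq_thickening_subset_iUnion_ball {s : Set X}
    (hs : IsSeparable s) (hne : s.Nonempty) (δ : ℝ) :
    ∃ y : ℕ → X, range y ⊆ s ∧ thickening δ s ⊆ ⋃ k, ball (y k) δ := by
  obtain ⟨c, hcs, hc, hsc⟩ := hs.exists_countable_dense_subset
  have hcne : c.Nonempty := by
    rw [nonempty_iff_ne_empty]
    rintro rfl
    rw [closure_empty, subset_empty_iff] at hsc
    exact hne.ne_empty hsc
  obtain ⟨y, rfl⟩ := hc.exists_eq_range hcne
  refine ⟨y, hcs, ?_⟩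
  calc thickening δ s ⊆ thickening δ (closure (range y)) := thickening_subset_of_subset δ hsc
    _ = ⋃ k, ball (y k) δ := by rw [thickening_closure, thickening_eq_biUnion_ball, biUnion_range]

section Measurable

variable [MeasurableSpace X] [OpensMeasurableSpace X]

theorem exists_measurable_dist_lt_of_subset_iUnion_ball (y : ℕ → X) {t : Set X} {δ : ℝ}
    (ht : t ⊆ ⋃ k, ball (y k) δ) :
    ∃ f : X → X, Measurable f ∧ (∀ x, f x ∈ range y) ∧ ∀ x ∈ t, dist (f x) x < δ := by
  classical
  -- Points outside every ball are sent to `y 0`, which keeps the selection total.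
  let p : ℕ → X → Prop := fun k x => x ∈ ball (y k) δ ∨ x ∉ ⋃ k, ball (y k) δ
  have hp : ∀ x, ∃ k, p k x := fun x => by
    by_cases hx : x ∈ ⋃ k, ball (y k) δ
    · exact (mem_iUnion.1 hx).imp fun _ => Or.inl
    · exact ⟨0, Or.inr hx⟩
  have hpm : ∀ k, MeasurableSet {x | p k x} := fun k =>
    measurableSet_ball.union (MeasurableSet.iUnion fun _ => measurableSet_ball).compl
  refine ⟨fun x => y (Nat.find (hp x)), Measurable.find (fun _ => measurable_const) hpm hp,
    fun x => mem_range_self _, fun x hx => ?_⟩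
  rw [dist_comm, ← mem_ball]
  exact (Nat.find_spec (hp x)).resolve_right (not_not.2 (ht hx))

theorem exists_measurable_mapsTo_dist_lt {s t : Set X} (hs : TopologicalSpace.IsSeparable s)
    {δ : ℝ} (ht : t ⊆ thickening δ s) :
    ∃ f : X → X, Measurable f ∧ MapsTo f t s ∧ ∀ x ∈ t, dist (f x) x < δ := by
  rcases s.eq_empty_or_nonempty with rfl | hne
  · refine ⟨id, measurable_id, fun x hx => ?_, fun x hx => ?_⟩ <;>
      simpa using ht hx
  obtain ⟨y, hys, hcover⟩ := hs.exists_seq_thickening_subset_iUnion_ball hne δ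
  obtain ⟨f, hf, hfy, hdist⟩ := exists_measurable_dist_lt_of_subset_iUnion_ball y (ht.trans hcover)
  exact ⟨f, hf, fun x _ => hys (hfy x), hdist⟩

end Measurable

end PseudoMetric

theorem exists_borel_maps_of_hausdorff_tendsto_general
    {X : Type*} [MetricSpace X] [TopologicalSpace.SeparableSpace X]
    [MeasurableSpace X] [BorelSpace X]
    (A : ℕ → Set X) (Alim : Set X)
    (hfin : ∀ n, EMetric.hausdorffEdist (A n) Alim ≠ ⊤)
    (htend : Tendsto (fun n => Metric.hausdorffDist (A n) Alim) atTop (𝓝 0)) :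
    ∃ ι : ℕ → X → X,
      (∀ n, Set.MapsTo (ι n) (A n) Alim) ∧
      (∀ n, Measurable ((A n).restrict (ι n))) ∧
      (∀ ε : ℝ, 0 < ε → ∃ N : ℕ, ∀ n ≥ N, ∀ x ∈ A n, dist (ι n x) x < ε) := by
  set δ : ℕ → ℝ := fun n => hausdorffDist (A n) Alim + 1 / (n + 1)
  have hsub : ∀ n, A n ⊆ thickening (δ n) Alim := fun n =>
    subset_thickening_of_hausdorffDist_lt (hfin n) (lt_add_of_pos_right _ Nat.one_div_pos_of_nat)
  choose ι hmeas hmaps hdist using fun n =>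
    exists_measurable_mapsTo_dist_lt (TopologicalSpace.IsSeparable.of_separableSpace Alim) (hsub n)
  refine ⟨ι, hmaps, fun n => (hmeas n).comp measurable_subtype_coe, fun ε hε => ?_⟩
  have hδ : Tendsto δ atTop (𝓝 0) := by
    simpa [δ] using htend.add tendsto_one_div_add_atTop_nhds_zero_nat
  obtain ⟨N, hN⟩ := eventually_atTop.1 (hδ.eventually (gt_mem_nhds hε))
  exact ⟨N, fun n hn x hx => (hdist n x hx).trans (hN n hn)⟩

/-- If `(X, ρ)` is a separable metric space and `A n`, `A` are closed
subsets with finite Hausdorff distance tending to `0`, then there are Borel measurable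
maps `ι n : A n → A` with `sup_{x ∈ A n} ρ(ι n x, x) → 0`. -/
theorem exists_borel_maps_of_hausdorff_tendsto
    {X : Type*} [MetricSpace X] [TopologicalSpace.SeparableSpace X]
    [MeasurableSpace X] [BorelSpace X]
    (A : ℕ → Set X) (Alim : Set X)
    (hA : ∀ n, IsClosed (A n)) (hAlim : IsClosed Alim)
    (hfin : ∀ n, EMetric.hausdorffEdist (A n) Alim ≠ ⊤)
    (htend : Tendsto (fun n => Metric.hausdorffDist (A n) Alim) atTop (𝓝 0)) :
    ∃ ι : ℕ → X → X,
      (∀ n, Set.MapsTo (ι n) (A n) Alim) ∧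
      (∀ n, Measurable ((A n).restrict (ι n))) ∧
      (∀ ε : ℝ, 0 < ε → ∃ N : ℕ, ∀ n ≥ N, ∀ x ∈ A n, dist (ι n x) x < ε) :=
  exists_borel_maps_of_hausdorff_tendsto_general A Alim hfin htend
end

section
/- Let (X, ρ) be a locally compact separable metric space, {A_n} and A closed subsets with δ_H(A_n, A) → 0, μ_n Radon measures on A_n converging weakly to a Radon measure μ on A (as measures on X), and I_n : A_n → A Borel maps with sup_{x∈A_n} ρ(I_n(x), x) → 0. Then the pushforward measures μ_n ∘ I_n^{-1} converge weakly to μ on A. In particular, for every f ∈ C_c(A), the L²(A_n; μ_n)-norm of f ∘ I_n converges to the L²(A; μ)-norm of f. -/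
/-!
Extend `f ∈ C_c(A)` (Tietze, then a cutoff) to some `g ∈ C_c(X)`; since `μ n` lives on `A n` and
`ι n` maps `A n` into `A`, nothing changes when `f` is replaced by `g`. Weak convergence gives
`∫ g dμ n → ∫ g dμ`, so it remains to show `∫ (g ∘ ι n - g) dμ n → 0`. Uniform continuity of `g`
bounds the integrand by `ε` times the indicator of a fixed compact neighbourhood `K` of the support
of `g`, and weak convergence also bounds `μ n K` for all large `n`.
-/

open Metric MeasureTheory Filter Topology Set

theorem ContinuousOn.exists_continuous_hasCompactSupport_eqOn {X : Type*} [TopologicalSpace X]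
    [T4Space X] [LocallyCompactSpace X] {s : Set X} (hs : IsClosed s) {f : X → ℝ}
    (hf : ContinuousOn f s) (hK : IsCompact (closure {x ∈ s | f x ≠ 0})) :
    ∃ g : X → ℝ, Continuous g ∧ HasCompactSupport g ∧ EqOn g f s := by
  obtain ⟨F, hF⟩ := ContinuousMap.exists_restrict_eq hs ⟨s.domRestrict f, hf.domRestrict⟩
  obtain ⟨χ, hχ, -, hχc, -⟩ :=
    exists_continuous_one_zero_of_isCompact hK isClosed_empty (disjoint_empty _)
  refine ⟨fun x => χ x * F x, by fun_prop, hχc.mul_right, fun x hx => ?_⟩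
  have hFx : F x = f x := DFunLike.congr_fun hF ⟨x, hx⟩
  by_cases hfx : f x = 0
  · simp [hFx, hfx]
  · simp [hχ (subset_closure ⟨hx, hfx⟩), hFx]

theorem HasCompactSupport.exists_isCompact_norm_sub_le_indicator {X E : Type*}
    [PseudoMetricSpace X] [LocallyCompactSpace X] [SeminormedAddCommGroup E] {g : X → E}
    (hgc : HasCompactSupport g) (hg : Continuous g) :
    ∃ K, IsCompact K ∧ ∀ ε > 0, ∃ δ > 0, ∀ x y, dist y x < δ →
      ‖g y - g x‖ ≤ K.indicator (fun _ => ε) x := by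
  obtain ⟨δ₀, hδ₀, hK⟩ := hgc.isCompact.exists_isCompact_cthickening
  refine ⟨cthickening δ₀ (tsupport g), hK, fun ε hε => ?_⟩
  obtain ⟨δ₁, hδ₁, hgδ₁⟩ := uniformContinuous_iff.1 (hgc.uniformContinuous_of_continuous hg) ε hε
  refine ⟨min δ₀ δ₁, lt_min hδ₀ hδ₁, fun x y hxy => ?_⟩
  by_cases hx : x ∈ cthickening δ₀ (tsupport g)
  · rw [indicator_of_mem hx, ← dist_eq_norm]
    exact (hgδ₁ (hxy.trans_le (min_le_right _ _))).le
  · have hgx : g x = 0 := image_eq_zero_of_notMem_tsupport fun h => hx (self_subset_cthickening _ h)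
    have hgy : g y = 0 := image_eq_zero_of_notMem_tsupport fun h =>
      hx (mem_cthickening_of_dist_le x y δ₀ _ h (dist_comm x y ▸ hxy.le.trans (min_le_left _ _)))
    simp [hgx, hgy, indicator_of_notMem hx]

section WeakConvergence

variable {X : Type*} [MeasurableSpace X] {α : Type*} {l : Filter α} {μ : α → Measure X}

theorem exists_eventually_measureReal_le_of_tendsto_integral [TopologicalSpace X] [T2Space X]
    [LocallyCompactSpace X] [OpensMeasurableSpace X] [∀ i, IsFiniteMeasureOnCompacts (μ i)]
    {ν : Measure X}
    (hweak : ∀ g : X → ℝ, Continuous g → HasCompactSupport g →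
      Tendsto (fun i => ∫ x, g x ∂μ i) l (𝓝 (∫ x, g x ∂ν)))
    {K : Set X} (hK : IsCompact K) : ∃ C, ∀ᶠ i in l, (μ i).real K ≤ C := by
  obtain ⟨χ, hχ, -, hχc, hχ01⟩ :=
    exists_continuous_one_zero_of_isCompact hK isClosed_empty (disjoint_empty _)
  refine ⟨∫ x, χ x ∂ν + 1, ?_⟩
  filter_upwards [(hweak χ χ.continuous hχc).eventually (gt_mem_nhds (lt_add_one _))] with i hi
  have hind : K.indicator 1 ≤ χ := fun x => by
    by_cases hx : x ∈ K
    · simp [hx, hχ hx]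
    · simp [hx, (hχ01 x).1]
  calc (μ i).real K = ∫ x, K.indicator 1 x ∂μ i := (integral_indicator_one hK.measurableSet).symm
    _ ≤ ∫ x, χ x ∂μ i := integral_mono
        ((integrable_indicator_iff hK.measurableSet).2 (integrableOn_const hK.measure_lt_top.ne))
        (χ.continuous.integrable_of_hasCompactSupport hχc) hind
    _ ≤ _ := hi.le

theorem tendsto_integral_comp_sub_integral {E : Type*} [NormedAddCommGroup E] [NormedSpace ℝ E]
    [MetricSpace X] [LocallyCompactSpace X] [OpensMeasurableSpace X]
    [∀ i, IsFiniteMeasureOnCompacts (μ i)]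
    (hbdd : ∀ K, IsCompact K → ∃ C, ∀ᶠ i in l, (μ i).real K ≤ C)
    {ι : α → X → X} (hιmeas : ∀ i, AEMeasurable (ι i) (μ i))
    (hclose : ∀ ε > 0, ∀ᶠ i in l, ∀ᵐ x ∂μ i, dist (ι i x) x < ε)
    {g : X → E} (hg : Continuous g) (hgc : HasCompactSupport g) :
    Tendsto (fun i => ∫ x, g (ι i x) ∂μ i - ∫ x, g x ∂μ i) l (𝓝 0) := by
  rw [Metric.tendsto_nhds]
  intro ε hε
  obtain ⟨K, hK, hmod⟩ := hgc.exists_isCompact_norm_sub_le_indicator hg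
  obtain ⟨C, hC⟩ := hbdd K hK
  set η := ε / (|C| + 1)
  have hη : 0 < η := by positivity
  obtain ⟨δ, hδ, hgδ⟩ := hmod η hη
  filter_upwards [hC, hclose δ hδ] with i hCi hi
  have hpt : ∀ᵐ x ∂μ i, ‖g (ι i x) - g x‖ ≤ K.indicator (fun _ => η) x :=
    hi.mono fun x hx => hgδ x _ hx
  have hind : Integrable (K.indicator fun _ => η) (μ i) :=
    (integrable_indicator_iff hK.measurableSet).2 (integrableOn_const hK.measure_lt_top.ne)
  have hgi : Integrable g (μ i) := hg.integrable_of_hasCompactSupport hgc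
  have hgιi : Integrable (fun x => g (ι i x)) (μ i) := by
    refine (hgi.norm.add hind).mono'
      ((hg.stronglyMeasurable_of_hasCompactSupport hgc).aestronglyMeasurable.comp_aemeasurable
        (hιmeas i)) (hpt.mono fun x hx => ?_)
    calc ‖g (ι i x)‖ ≤ ‖g x‖ + ‖g (ι i x) - g x‖ := norm_le_norm_add_norm_sub' _ _
      _ ≤ _ := add_le_add_right hx _
  rw [dist_zero_right, ← integral_sub hgιi hgi]
  calc ‖∫ x, (g (ι i x) - g x) ∂μ i‖ ≤ ∫ x, K.indicator (fun _ => η) x ∂μ i :=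
        norm_integral_le_of_norm_le hind hpt
    _ = (μ i).real K * η := integral_indicator_const η hK.measurableSet
    _ ≤ |C| * η := by gcongr; exact hCi.trans (le_abs_self C)
    _ < ε := by
        rw [mul_div_assoc', div_lt_iff₀ (by positivity)]
        nlinarith

end WeakConvergence

theorem pushforward_weak_convergence_general
    {X : Type*} [MetricSpace X] [LocallyCompactSpace X]
    [MeasurableSpace X] [BorelSpace X]
    (A : ℕ → Set X) (Alim : Set X)
    (hA : ∀ n, IsClosed (A n)) (hAlim : IsClosed Alim)
    (μ : ℕ → Measure X) (μlim : Measure X)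
    [∀ n, (μ n).Regular]
    (hsupp : ∀ n, μ n ((A n)ᶜ) = 0) (hsuppl : μlim (Alimᶜ) = 0)
    (hweak : ∀ f : X → ℝ, Continuous f → HasCompactSupport f →
      Tendsto (fun n => ∫ x, f x ∂(μ n)) atTop (𝓝 (∫ x, f x ∂μlim)))
    (ι : ℕ → X → X)
    (hιmaps : ∀ n, Set.MapsTo (ι n) (A n) Alim)
    (hιmeas : ∀ n, Measurable ((A n).restrict (ι n)))
    (hιdist : ∀ ε : ℝ, 0 < ε → ∃ N : ℕ, ∀ n ≥ N, ∀ x ∈ A n, dist (ι n x) x < ε) :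
    -- weak convergence of `μ n ∘ ι n ⁻¹` to `μ` on `(A, ρ)`
    (∀ f : X → ℝ, ContinuousOn f Alim →
      IsCompact (closure {x ∈ Alim | f x ≠ 0}) →
      Tendsto (fun n => ∫ x, f (ι n x) ∂(μ n)) atTop (𝓝 (∫ x, f x ∂μlim))) ∧
    -- convergence of the `L²`-norms
    (∀ f : X → ℝ, ContinuousOn f Alim →
      IsCompact (closure {x ∈ Alim | f x ≠ 0}) →
      Tendsto (fun n => ∫ x, (f (ι n x)) ^ 2 ∂(μ n)) atTop
        (𝓝 (∫ x, (f x) ^ 2 ∂μlim))) := by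
  have hae : ∀ n, ∀ᵐ x ∂μ n, x ∈ A n := fun n => mem_ae_iff.2 (hsupp n)
  have haelim : ∀ᵐ x ∂μlim, x ∈ Alim := mem_ae_iff.2 hsuppl
  have hιae : ∀ n, AEMeasurable (ι n) (μ n) := fun n => by
    rw [← Measure.restrict_eq_self_of_ae_mem (hae n)]
    exact aemeasurable_restrict_of_measurable_subtype (hA n).measurableSet (hιmeas n)
  have hclose : ∀ ε > 0, ∀ᶠ n in atTop, ∀ᵐ x ∂μ n, dist (ι n x) x < ε := fun ε hε => by
    obtain ⟨N, hN⟩ := hιdist ε hε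
    filter_upwards [eventually_ge_atTop N] with n hn using (hae n).mono (hN n hn)
  have key : ∀ f : X → ℝ, ContinuousOn f Alim → IsCompact (closure {x ∈ Alim | f x ≠ 0}) →
      Tendsto (fun n => ∫ x, f (ι n x) ∂(μ n)) atTop (𝓝 (∫ x, f x ∂μlim)) := by
    intro f hf hK
    obtain ⟨g, hg, hgc, hgf⟩ := hf.exists_continuous_hasCompactSupport_eqOn hAlim hK
    have hcomp : ∀ n, ∫ x, f (ι n x) ∂μ n = ∫ x, g (ι n x) ∂μ n := fun n =>
      integral_congr_ae ((hae n).mono fun x hx => (hgf (hιmaps n hx)).symm)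
    rw [funext hcomp, integral_congr_ae (haelim.mono fun x hx => (hgf hx).symm)]
    simpa using (tendsto_integral_comp_sub_integral
      (fun K hK => exists_eventually_measureReal_le_of_tendsto_integral hweak hK)
      hιae hclose hg hgc).add (hweak g hg hgc)
  refine ⟨key, fun f hf hK => key (f · ^ 2) (hf.pow 2) ?_⟩
  simpa only [ne_eq, pow_eq_zero_iff two_ne_zero] using hK

/-- In the basic setting (locally compact separable metric space `X`,
closed sets `A n → A` in Hausdorff distance, Radon measures `μ n` on `A n` converging
weakly to `μ` on `A`, and Borel maps `ι n : A n → A` with `sup dist (ι n x) x → 0`),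
the pushforwards `μ n ∘ ι n ⁻¹` converge weakly to `μ` on `A`; in particular the
`L²`-norms of `f ∘ ι n` converge to the `L²`-norm of `f` for every `f ∈ C_c(A)`. -/
theorem pushforward_weak_convergence
    {X : Type*} [MetricSpace X] [TopologicalSpace.SeparableSpace X] [LocallyCompactSpace X]
    [MeasurableSpace X] [BorelSpace X]
    (A : ℕ → Set X) (Alim : Set X)
    (hA : ∀ n, IsClosed (A n)) (hAlim : IsClosed Alim)
    (hfin : ∀ n, EMetric.hausdorffEdist (A n) Alim ≠ ⊤)
    (htend : Tendsto (fun n => Metric.hausdorffDist (A n) Alim) atTop (𝓝 0))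
    (μ : ℕ → Measure X) (μlim : Measure X)
    [∀ n, (μ n).Regular] [μlim.Regular]
    (hsupp : ∀ n, μ n ((A n)ᶜ) = 0) (hsuppl : μlim (Alimᶜ) = 0)
    (hweak : ∀ f : X → ℝ, Continuous f → HasCompactSupport f →
      Tendsto (fun n => ∫ x, f x ∂(μ n)) atTop (𝓝 (∫ x, f x ∂μlim)))
    (ι : ℕ → X → X)
    (hιmaps : ∀ n, Set.MapsTo (ι n) (A n) Alim)
    (hιmeas : ∀ n, Measurable ((A n).restrict (ι n)))
    (hιdist : ∀ ε : ℝ, 0 < ε → ∃ N : ℕ, ∀ n ≥ N, ∀ x ∈ A n, dist (ι n x) x < ε) :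
    -- weak convergence of `μ n ∘ ι n ⁻¹` to `μ` on `(A, ρ)`
    (∀ f : X → ℝ, ContinuousOn f Alim →
      IsCompact (closure {x ∈ Alim | f x ≠ 0}) →
      Tendsto (fun n => ∫ x, f (ι n x) ∂(μ n)) atTop (𝓝 (∫ x, f x ∂μlim))) ∧
    -- convergence of the `L²`-norms
    (∀ f : X → ℝ, ContinuousOn f Alim →
      IsCompact (closure {x ∈ Alim | f x ≠ 0}) →
      Tendsto (fun n => ∫ x, (f (ι n x)) ^ 2 ∂(μ n)) atTop
        (𝓝 (∫ x, (f x) ^ 2 ∂μlim))) :=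
  pushforward_weak_convergence_general A Alim hA hAlim μ μlim hsupp hsuppl hweak ι hιmaps hιmeas
    hιdist
end

section
/- Let (X, ρ) be a locally compact separable metric space, {A_n} and A closed subsets with δ_H(A_n, A) → 0, and suppose f_n ∈ C(A_n) are locally uniformly bounded and equicontinuous, meaning for every compact K ⊂ X, sup_n ‖f_n|_{A_n∩K}‖_∞ < ∞ and lim_{δ→0} sup{|f_n(x) − f_n(y)| : n ≥ 1, x, y ∈ A_n ∩ K, ρ(x, y) < δ} = 0. Then there exist f ∈ C(A) and a subsequence {f_{n_k}} such that f_{n_k} ↣ f, i.e., f_{n_k}(x_{n_k}) → f(x) whenever x_{n_k} ∈ A_{n_k} converges to x ∈ A. -/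
/-!
Every point of `Alim` is the limit of points `y n ∈ A n`, since `δ_H(A n, Alim) → 0`, and along
such sequences the values `f n (y n)` are bounded. A diagonal argument therefore gives a subsequence
along which these values converge at every point of a countable dense subset of `Alim`.
Local compactness upgrades equicontinuity on compacts to equicontinuity near each point `x`,
uniformly in `n`; it forces the values along two sequences tending to `x` to merge, and keeps
the values near `x` close to those near a dense point. So the limit exists at every `x ∈ Alim`,
is independent of the sequence, and is continuous.
-/

open Metric MeasureTheory Filter Topology

/-- Generalized locally uniform convergence `f n ↣ g` for functions defined on
varying sets `A n` converging to `Alim`: `f n (x n) → g x` whenever `x n ∈ A n`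
converges to `x ∈ Alim`. -/
def ConvTo {X : Type*} [MetricSpace X] (A : ℕ → Set X) (Alim : Set X)
    (f : ℕ → X → ℝ) (g : X → ℝ) : Prop :=
  ∀ (x : ℕ → X) (x₀ : X), (∀ n, x n ∈ A n) → x₀ ∈ Alim →
    Tendsto x atTop (𝓝 x₀) → Tendsto (fun n => f n (x n)) atTop (𝓝 (g x₀))

open Set

/-- Unlike `EquicontinuousAt`, the point `x` need not lie in the domains `A i`, so only pairs of
points near `x` are compared. -/
def EquicontinuousAtOn {ι X E : Type*} [TopologicalSpace X] [PseudoMetricSpace E]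
    (A : ι → Set X) (f : ι → X → E) (x : X) : Prop :=
  ∀ ε > 0, ∃ U ∈ 𝓝 x, ∀ i, ∀ p ∈ A i ∩ U, ∀ q ∈ A i ∩ U, dist (f i p) (f i q) < ε

def TendstoAlong {X E : Type*} [TopologicalSpace X] [TopologicalSpace E]
    (A : ℕ → Set X) (f : ℕ → X → E) (x : X) (L : E) : Prop :=
  ∀ y : ℕ → X, (∀ n, y n ∈ A n) → Tendsto y atTop (𝓝 x) →
    Tendsto (fun n => f n (y n)) atTop (𝓝 L)

theorem equicontinuousAtOn_of_isCompact {ι X E : Type*} [PseudoMetricSpace X]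
    [LocallyCompactSpace X] [PseudoMetricSpace E] {A : ι → Set X} {f : ι → X → E}
    (hequi : ∀ K : Set X, IsCompact K → ∀ ε > 0, ∃ δ > 0,
      ∀ i, ∀ p ∈ A i ∩ K, ∀ q ∈ A i ∩ K, dist p q < δ → dist (f i p) (f i q) < ε)
    (x : X) : EquicontinuousAtOn A f x := by
  intro ε hε
  obtain ⟨K, hKc, hKx⟩ := exists_compact_mem_nhds x
  obtain ⟨δ, hδ, hKδ⟩ := hequi K hKc ε hε
  refine ⟨K ∩ ball x (δ / 2), inter_mem hKx (ball_mem_nhds x (half_pos hδ)),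
    fun i p ⟨hpA, hpK, hpx⟩ q ⟨hqA, hqK, hqx⟩ => hKδ i p ⟨hpA, hpK⟩ q ⟨hqA, hqK⟩ ?_⟩
  calc dist p q ≤ dist p x + dist q x := dist_triangle_right p q x
    _ < δ / 2 + δ / 2 := add_lt_add hpx hqx
    _ = δ := add_halves δ

section Equicontinuity

variable {ι X E : Type*} [TopologicalSpace X] [PseudoMetricSpace E]
  {A : ι → Set X} {f : ι → X → E} {x : X}

theorem EquicontinuousAtOn.comp {κ : Type*} (h : EquicontinuousAtOn A f x) (φ : κ → ι) :
    EquicontinuousAtOn (fun k => A (φ k)) (fun k => f (φ k)) x := fun ε hε =>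
  let ⟨U, hU, hUε⟩ := h ε hε
  ⟨U, hU, fun k => hUε (φ k)⟩

theorem EquicontinuousAtOn.tendsto_dist {l : Filter ι} (h : EquicontinuousAtOn A f x)
    {y z : ι → X} (hy : ∀ i, y i ∈ A i) (hz : ∀ i, z i ∈ A i)
    (hyx : Tendsto y l (𝓝 x)) (hzx : Tendsto z l (𝓝 x)) :
    Tendsto (fun i => dist (f i (y i)) (f i (z i))) l (𝓝 0) := by
  refine Metric.tendsto_nhds.2 fun ε hε => ?_
  obtain ⟨U, hU, hUε⟩ := h ε hε
  filter_upwards [hyx hU, hzx hU] with i hyU hzU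
  rw [Real.dist_0_eq_abs, abs_of_nonneg dist_nonneg]
  exact hUε i (y i) ⟨hy i, hyU⟩ (z i) ⟨hz i, hzU⟩

end Equicontinuity

theorem EquicontinuousAtOn.tendstoAlong {X E : Type*} [TopologicalSpace X] [PseudoMetricSpace E]
    {A : ℕ → Set X} {f : ℕ → X → E} {x : X} {L : E} (h : EquicontinuousAtOn A f x)
    {y : ℕ → X} (hy : ∀ n, y n ∈ A n) (hyx : Tendsto y atTop (𝓝 x))
    (hL : Tendsto (fun n => f n (y n)) atTop (𝓝 L)) : TendstoAlong A f x L :=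
  fun _z hz hzx => tendsto_of_tendsto_of_dist hL (h.tendsto_dist hy hz hyx hzx)

theorem cauchySeq_of_forall_eventually_dist_lt {E : Type*} [PseudoMetricSpace E] {u : ℕ → E}
    (h : ∀ ε > 0, ∃ v : ℕ → E, CauchySeq v ∧ ∀ᶠ n in atTop, dist (u n) (v n) < ε) :
    CauchySeq u := by
  refine Metric.cauchySeq_iff.2 fun ε hε => ?_
  obtain ⟨v, hv, huv⟩ := h (ε / 3) (by positivity)
  obtain ⟨N₁, hN₁⟩ := Metric.cauchySeq_iff.1 hv (ε / 3) (by positivity)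
  obtain ⟨N₂, hN₂⟩ := eventually_atTop.1 huv
  refine ⟨max N₁ N₂, fun m hm n hn => ?_⟩
  rw [ge_iff_le, max_le_iff] at hm hn
  calc dist (u m) (u n) ≤ dist (u m) (v m) + dist (v m) (v n) + dist (v n) (u n) :=
        dist_triangle4 _ _ _ _
    _ < ε / 3 + ε / 3 + ε / 3 := by
        gcongr
        · exact hN₂ m hm.2
        · exact hN₁ m hm.1 n hn.1
        · exact dist_comm (v n) (u n) ▸ hN₂ n hn.2
    _ = ε := by ring

theorem EquicontinuousAtOn.cauchySeq {X E : Type*} [TopologicalSpace X] [PseudoMetricSpace E]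
    {A : ℕ → Set X} {f : ℕ → X → E} {t : Set X} {x : X} (h : EquicontinuousAtOn A f x)
    (hxt : x ∈ closure t)
    (ht : ∀ d ∈ t, ∃ z : ℕ → X, (∀ n, z n ∈ A n) ∧ Tendsto z atTop (𝓝 d) ∧
      CauchySeq fun n => f n (z n))
    {y : ℕ → X} (hy : ∀ n, y n ∈ A n) (hyx : Tendsto y atTop (𝓝 x)) :
    CauchySeq fun n => f n (y n) := by
  refine cauchySeq_of_forall_eventually_dist_lt fun ε hε => ?_
  obtain ⟨U, hU, hUε⟩ := h ε hε
  obtain ⟨d, hdU, hdt⟩ := mem_closure_iff_nhds.1 hxt (interior U) (interior_mem_nhds.2 hU)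
  obtain ⟨z, hz, hzd, hzc⟩ := ht d hdt
  refine ⟨_, hzc, ?_⟩
  filter_upwards [hyx hU, hzd (isOpen_interior.mem_nhds hdU)] with n hyU hzU
  exact hUε n (y n) ⟨hy n, hyU⟩ (z n) ⟨hz n, interior_subset hzU⟩

theorem exists_strictMono_forall_tendsto {ι E : Type*} [Countable ι] [PseudoMetricSpace E]
    [ProperSpace E] (u : ℕ → ι → E) (hu : ∀ i, Bornology.IsBounded (range fun n => u n i)) :
    ∃ φ : ℕ → ℕ, StrictMono φ ∧ ∃ L : ι → E, ∀ i, Tendsto (fun k => u (φ k) i) atTop (𝓝 (L i)) := by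
  have hS : IsCompact (univ.pi fun i => closure (range fun n => u n i)) :=
    isCompact_univ_pi fun i => (hu i).isCompact_closure
  obtain ⟨L, -, φ, hφ, hL⟩ := hS.tendsto_subseq fun n i _ => subset_closure ⟨n, rfl⟩
  exact ⟨φ, hφ, L, fun i => tendsto_pi_nhds.1 hL i⟩

theorem exists_tendsto_of_hausdorffDist {X : Type*} [PseudoMetricSpace X] {A : ℕ → Set X}
    {s : Set X} (hfin : ∀ n, hausdorffEDist (A n) s ≠ ⊤)
    (htend : Tendsto (fun n => hausdorffDist (A n) s) atTop (𝓝 0)) {x : X} (hx : x ∈ s) :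
    ∃ y : ℕ → X, (∀ n, y n ∈ A n) ∧ Tendsto y atTop (𝓝 x) := by
  have hr : ∀ n : ℕ, hausdorffDist (A n) s < hausdorffDist (A n) s + 1 / (n + 1) :=
    fun n => lt_add_of_pos_right _ Nat.one_div_pos_of_nat
  choose y hyA hyx using fun n => exists_dist_lt_of_hausdorffDist_lt' hx (hr n) (hfin n)
  refine ⟨y, hyA, tendsto_iff_dist_tendsto_zero.2 <|
    squeeze_zero (fun _ => dist_nonneg) (fun n => (hyx n).le) ?_⟩
  simpa using htend.add tendsto_one_div_add_atTop_nhds_zero_nat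

section ConvTo

variable {X : Type*} [MetricSpace X] {A : ℕ → Set X} {s : Set X} {f : ℕ → X → ℝ}

theorem ConvTo.continuousOn {g : X → ℝ} (hg : ConvTo A s f g)
    (happrox : ∀ x ∈ s, ∃ y : ℕ → X, (∀ n, y n ∈ A n) ∧ Tendsto y atTop (𝓝 x))
    (hE : ∀ x ∈ s, EquicontinuousAtOn A f x) : ContinuousOn g s := by
  intro x hx
  refine Metric.continuousWithinAt_iff.2 fun ε hε => ?_
  obtain ⟨U, hU, hUε⟩ := hE x hx (ε / 2) (half_pos hε)
  obtain ⟨δ, hδ, hδU⟩ := Metric.mem_nhds_iff.1 hU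
  refine ⟨δ, hδ, fun z hz hzx => ?_⟩
  obtain ⟨y, hy, hyx⟩ := happrox x hx
  obtain ⟨w, hw, hwz⟩ := happrox z hz
  have hclose : ∀ᶠ n in atTop, dist (f n (w n)) (f n (y n)) ≤ ε / 2 := by
    filter_upwards [hwz (isOpen_ball.mem_nhds hzx), hyx (ball_mem_nhds x hδ)] with n hwU hyU
    exact (hUε n (w n) ⟨hw n, hδU hwU⟩ (y n) ⟨hy n, hδU hyU⟩).le
  have := le_of_tendsto ((hg w z hw hz hwz).dist (hg y x hy hx hyx)) hclose
  linarith

theorem isBounded_range_of_tendsto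
    (hbdd : ∀ K : Set X, IsCompact K → ∃ M : ℝ, ∀ n, ∀ x ∈ A n ∩ K, |f n x| ≤ M)
    {y : ℕ → X} {x : X} (hy : ∀ n, y n ∈ A n) (hyx : Tendsto y atTop (𝓝 x)) :
    Bornology.IsBounded (range fun n => f n (y n)) := by
  obtain ⟨M, hM⟩ := hbdd _ hyx.isCompact_insert_range
  exact isBounded_iff_forall_norm_le.2
    ⟨M, forall_mem_range.2 fun n => hM n (y n) ⟨hy n, mem_insert_of_mem _ (mem_range_self n)⟩⟩

theorem exists_strictMono_convTo (hs : TopologicalSpace.IsSeparable s)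
    (happrox : ∀ x ∈ s, ∃ y : ℕ → X, (∀ n, y n ∈ A n) ∧ Tendsto y atTop (𝓝 x))
    (hE : ∀ x ∈ s, EquicontinuousAtOn A f x)
    (hbdd : ∀ K : Set X, IsCompact K → ∃ M : ℝ, ∀ n, ∀ x ∈ A n ∩ K, |f n x| ≤ M) :
    ∃ g : X → ℝ, ContinuousOn g s ∧ ∃ φ : ℕ → ℕ, StrictMono φ ∧
      ConvTo (fun k => A (φ k)) s (fun k => f (φ k)) g := by
  obtain ⟨t, hts, htc, hst⟩ := hs.exists_countable_dense_subset
  have := htc.to_subtype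
  choose a ha using happrox
  obtain ⟨φ, hφ, _, hφt⟩ := exists_strictMono_forall_tendsto
    (fun n (d : t) => f n (a d (hts d.2) n))
    fun d => isBounded_range_of_tendsto hbdd (ha d (hts d.2)).1 (ha d (hts d.2)).2
  have haφ_mem : ∀ x (hx : x ∈ s), ∀ k, a x hx (φ k) ∈ A (φ k) :=
    fun x hx k => (ha x hx).1 (φ k)
  have haφ_tendsto : ∀ x (hx : x ∈ s), Tendsto (fun k => a x hx (φ k)) atTop (𝓝 x) :=
    fun x hx => (ha x hx).2.comp hφ.tendsto_atTop
  have hEφ : ∀ x ∈ s, EquicontinuousAtOn (fun k => A (φ k)) (fun k => f (φ k)) x :=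
    fun x hx => (hE x hx).comp φ
  have hlim : ∀ x ∈ s, ∃ L, TendstoAlong (fun k => A (φ k)) (fun k => f (φ k)) x L := by
    intro x hx
    obtain ⟨L, hL⟩ := cauchySeq_tendsto_of_complete <| (hEφ x hx).cauchySeq (hst hx)
      (fun d hd => ⟨_, haφ_mem d (hts hd), haφ_tendsto d (hts hd), (hφt ⟨d, hd⟩).cauchySeq⟩)
      (haφ_mem x hx) (haφ_tendsto x hx)
    exact ⟨L, (hEφ x hx).tendstoAlong (haφ_mem x hx) (haφ_tendsto x hx) hL⟩
  choose! g hg using hlim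
  have hconv : ConvTo (fun k => A (φ k)) s (fun k => f (φ k)) g :=
    fun y x hy hx => hg x hx y hy
  exact ⟨g, hconv.continuousOn (fun x hx => ⟨_, haφ_mem x hx, haφ_tendsto x hx⟩) hEφ, φ, hφ, hconv⟩

end ConvTo

theorem arzela_ascoli_varying_sets_general
    {X : Type*} [MetricSpace X] [TopologicalSpace.SeparableSpace X] [LocallyCompactSpace X]
    (A : ℕ → Set X) (Alim : Set X)
    (hfin : ∀ n, EMetric.hausdorffEdist (A n) Alim ≠ ⊤)
    (htend : Tendsto (fun n => Metric.hausdorffDist (A n) Alim) atTop (𝓝 0))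
    (f : ℕ → X → ℝ)
    (hbdd : ∀ K : Set X, IsCompact K → ∃ M : ℝ, ∀ n, ∀ x ∈ A n ∩ K, |f n x| ≤ M)
    (hequi : ∀ K : Set X, IsCompact K → ∀ ε : ℝ, 0 < ε → ∃ δ : ℝ, 0 < δ ∧
      ∀ n, ∀ x ∈ A n ∩ K, ∀ y ∈ A n ∩ K, dist x y < δ → |f n x - f n y| < ε) :
    ∃ g : X → ℝ, ContinuousOn g Alim ∧
      ∃ φ : ℕ → ℕ, StrictMono φ ∧
        ConvTo (fun k => A (φ k)) Alim (fun k => f (φ k)) g := by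
  refine exists_strictMono_convTo (TopologicalSpace.IsSeparable.of_separableSpace Alim)
    (fun x hx => exists_tendsto_of_hausdorffDist hfin htend hx)
    (fun x _ => equicontinuousAtOn_of_isCompact (fun K hK ε hε => ?_) x) hbdd
  simpa only [Real.dist_eq] using hequi K hK ε hε

/-- (Arzelà–Ascoli for varying sets.) If `f n ∈ C(A n)` are locally
uniformly bounded and equicontinuous, then some subsequence converges in the sense
`↣` to a continuous function on `A`. -/
theorem arzela_ascoli_varying_sets
    {X : Type*} [MetricSpace X] [TopologicalSpace.SeparableSpace X] [LocallyCompactSpace X]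
    (A : ℕ → Set X) (Alim : Set X)
    (hA : ∀ n, IsClosed (A n)) (hAlim : IsClosed Alim)
    (hfin : ∀ n, EMetric.hausdorffEdist (A n) Alim ≠ ⊤)
    (htend : Tendsto (fun n => Metric.hausdorffDist (A n) Alim) atTop (𝓝 0))
    (f : ℕ → X → ℝ) (hf : ∀ n, ContinuousOn (f n) (A n))
    (hbdd : ∀ K : Set X, IsCompact K → ∃ M : ℝ, ∀ n, ∀ x ∈ A n ∩ K, |f n x| ≤ M)
    (hequi : ∀ K : Set X, IsCompact K → ∀ ε : ℝ, 0 < ε → ∃ δ : ℝ, 0 < δ ∧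
      ∀ n, ∀ x ∈ A n ∩ K, ∀ y ∈ A n ∩ K, dist x y < δ → |f n x - f n y| < ε) :
    ∃ g : X → ℝ, ContinuousOn g Alim ∧
      ∃ φ : ℕ → ℕ, StrictMono φ ∧
        ConvTo (fun k => A (φ k)) Alim (fun k => f (φ k)) g :=
  arzela_ascoli_varying_sets_general A Alim hfin htend f hbdd hequi
end

section
/- Let (X, ρ) be a locally compact separable metric space with closed subsets A_n → A in Hausdorff distance, and suppose f_{m,n} ∈ C(A_n) and f_m, f ∈ C(A) satisfy: f_{m,n} ↣ f_m as n → ∞ for each m, and f_m → f locally uniformly as m → ∞. Then there exist integers m(n) → ∞ such that f_{m(n),n} ↣ f as n → ∞. -/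
/-! Hausdorff convergence gives a rate `η n → 0` such that every point of `A n` has a partner in
`Alim` within `η n`. Then `F m n ↣ fl m` is uniform on compact sets: `|F m n x - fl m y|` is
eventually small for all `x ∈ A n ∩ K`, `y ∈ Alim ∩ K` with `dist x y ≤ η n`, since otherwise
compactness yields bad points converging along a subsequence, which can be completed to a full
sequence in the `A n` violating `F m n ↣ fl m`. Adding the uniform convergence `fl m → f` on
compacts, for each set `K j` of a compact exhaustion there is `M j ≥ j` with `F (M j) n` eventually
`1/(j+1)`-close to `f` on `K j`; letting the level `j` grow slowly enough with `n` gives `m(n)`. -/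

open Metric MeasureTheory Filter Topology

section Sequences

theorem tendsto_extend_of_strictMono {α : Type*} {l : Filter α} {σ : ℕ → ℕ} (hσ : StrictMono σ)
    {x a : ℕ → α} (hx : Tendsto x atTop l) (ha : Tendsto a atTop l) :
    Tendsto (Function.extend σ x a) atTop l := by
  intro U hU
  obtain ⟨N, hN⟩ := eventually_atTop.1 (ha hU)
  obtain ⟨k₀, hk₀⟩ := eventually_atTop.1 (hx hU)
  refine mem_atTop_sets.2 ⟨max N (σ k₀), fun n hn => ?_⟩
  by_cases h : ∃ k, σ k = n
  · obtain ⟨k, rfl⟩ := h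
    rw [Set.mem_preimage, hσ.injective.extend_apply]
    exact hk₀ k (hσ.le_iff_le.1 (le_of_max_le_right hn))
  · rw [Set.mem_preimage, Function.extend_apply' _ _ _ h]
    exact hN n (le_of_max_le_left hn)

theorem exists_tendsto_atTop_eventually_diag {P : ℕ → ℕ → Prop}
    (h : ∀ j, ∀ᶠ n in atTop, P j n) :
    ∃ J : ℕ → ℕ, Tendsto J atTop atTop ∧ ∀ᶠ n in atTop, P (J n) n := by
  obtain ⟨φ, hφ, hφP⟩ := extraction_forall_of_eventually' fun j =>
    (h j).exists_forall_of_atTop.imp fun N hN k hk n hn => hN n (hk.trans hn)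
  refine ⟨fun n => Nat.findGreatest (fun j => φ j ≤ n) n, ?_, ?_⟩
  · exact tendsto_atTop_atTop.2 fun j =>
      ⟨φ j, fun n hn => Nat.le_findGreatest ((hφ.id_le j).trans hn) hn⟩
  · filter_upwards [eventually_ge_atTop (φ 0)] with n hn
    exact hφP _ n (Nat.findGreatest_spec (P := fun j => φ j ≤ n) (Nat.zero_le n) hn)

end Sequences

section HausdorffConvergence

variable {X : Type*} [MetricSpace X]

theorem exists_rate_of_tendsto_hausdorffDist {s t : ℕ → Set X}
    (hfin : ∀ n, hausdorffEDist (s n) (t n) ≠ ⊤)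
    (htend : Tendsto (fun n => hausdorffDist (s n) (t n)) atTop (𝓝 0)) :
    ∃ η : ℕ → ℝ, Tendsto η atTop (𝓝 0) ∧ ∀ n, ∀ x ∈ s n, ∃ y ∈ t n, dist x y ≤ η n :=
  ⟨fun n => hausdorffDist (s n) (t n) + 1 / (n + 1),
    by simpa using htend.add tendsto_one_div_add_atTop_nhds_zero_nat,
    fun n _ hx => (exists_dist_lt_of_hausdorffDist_lt hx
      (lt_add_of_pos_right _ Nat.one_div_pos_of_nat) (hfin n)).imp fun _ hy => ⟨hy.1, hy.2.le⟩⟩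

theorem exists_seq_tendsto_of_tendsto_hausdorffDist {A : ℕ → Set X} {Alim : Set X}
    (hfin : ∀ n, hausdorffEDist (A n) Alim ≠ ⊤)
    (htend : Tendsto (fun n => hausdorffDist (A n) Alim) atTop (𝓝 0))
    {x₀ : X} (hx₀ : x₀ ∈ Alim) :
    ∃ a : ℕ → X, (∀ n, a n ∈ A n) ∧ Tendsto a atTop (𝓝 x₀) := by
  obtain ⟨η, hη, happrox⟩ := exists_rate_of_tendsto_hausdorffDist (s := fun _ => Alim) (t := A)
    (fun n => by rw [hausdorffEDist_comm]; exact hfin n)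
    (by simpa only [hausdorffDist_comm] using htend)
  choose a ha hdist using fun n => happrox n x₀ hx₀
  refine ⟨a, ha, tendsto_iff_dist_tendsto_zero.2 ?_⟩
  exact squeeze_zero (fun _ => dist_nonneg) (fun n => (dist_comm _ _).trans_le (hdist n)) hη

end HausdorffConvergence

section ConvTo

variable {X : Type*} [MetricSpace X] {A : ℕ → Set X} {Alim : Set X} {G : ℕ → X → ℝ} {g : X → ℝ}

def CloseOn (s t K : Set X) (δ ε : ℝ) (G g : X → ℝ) : Prop :=
  ∀ x ∈ s ∩ K, ∀ y ∈ t ∩ K, dist x y ≤ δ → dist (G x) (g y) < ε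

theorem CloseOn.trans_dist {s t K : Set X} {δ ε ε' : ℝ} {G g h : X → ℝ}
    (hG : CloseOn s t K δ ε G g) (hg : ∀ y ∈ t ∩ K, dist (g y) (h y) < ε') :
    CloseOn s t K δ (ε + ε') G h := fun x hx y hy hxy =>
  (dist_triangle _ (g y) _).trans_lt (add_lt_add (hG x hx y hy hxy) (hg y hy))

theorem ConvTo.tendsto_comp_strictMono (hconv : ConvTo A Alim G g)
    (hreach : ∀ x₀ ∈ Alim, ∃ a : ℕ → X, (∀ n, a n ∈ A n) ∧ Tendsto a atTop (𝓝 x₀))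
    {σ : ℕ → ℕ} (hσ : StrictMono σ) {x : ℕ → X} (hx : ∀ k, x k ∈ A (σ k))
    {x₀ : X} (hxt : Tendsto x atTop (𝓝 x₀)) (hx₀ : x₀ ∈ Alim) :
    Tendsto (fun k => G (σ k) (x k)) atTop (𝓝 (g x₀)) := by
  obtain ⟨a, ha, hat⟩ := hreach x₀ hx₀
  have hmem : ∀ n, Function.extend σ x a n ∈ A n := fun n => by
    by_cases h : ∃ k, σ k = n
    · obtain ⟨k, rfl⟩ := h
      rw [hσ.injective.extend_apply]
      exact hx k
    · rw [Function.extend_apply' _ _ _ h]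
      exact ha n
  have := (hconv _ x₀ hmem hx₀ (tendsto_extend_of_strictMono hσ hxt hat)).comp hσ.tendsto_atTop
  simpa only [Function.comp_def, hσ.injective.extend_apply] using this

theorem ConvTo.eventually_closeOn (hconv : ConvTo A Alim G g) (hAlim : IsClosed Alim)
    (hreach : ∀ x₀ ∈ Alim, ∃ a : ℕ → X, (∀ n, a n ∈ A n) ∧ Tendsto a atTop (𝓝 x₀))
    (hg : ContinuousOn g Alim) {K : Set X} (hK : IsCompact K)
    {η : ℕ → ℝ} (hη : Tendsto η atTop (𝓝 0)) {ε : ℝ} (hε : 0 < ε) :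
    ∀ᶠ n in atTop, CloseOn (A n) Alim K (η n) ε (G n) g := by
  by_contra h
  obtain ⟨φ, hφ, hbad⟩ := extraction_of_frequently_atTop (not_eventually.1 h)
  simp only [CloseOn, not_forall, not_lt] at hbad
  choose x hx y hy hxy hfar using hbad
  obtain ⟨x₀, -, ψ, hψ, hxψ⟩ := hK.tendsto_subseq fun k => (hx k).2
  have hdist : Tendsto (fun k => dist (x (ψ k)) (y (ψ k))) atTop (𝓝 0) :=
    squeeze_zero (fun _ => dist_nonneg) (fun k => hxy (ψ k))
      (hη.comp (hφ.comp hψ).tendsto_atTop)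
  have hyψ : Tendsto (fun k => y (ψ k)) atTop (𝓝 x₀) := hxψ.congr_dist hdist
  have hx₀ : x₀ ∈ Alim := hAlim.mem_of_tendsto hyψ (Eventually.of_forall fun k => (hy _).1)
  have hGx : Tendsto (fun k => G (φ (ψ k)) (x (ψ k))) atTop (𝓝 (g x₀)) :=
    hconv.tendsto_comp_strictMono hreach (hφ.comp hψ) (fun k => (hx _).1) hxψ hx₀
  have hgy : Tendsto (fun k => g (y (ψ k))) atTop (𝓝 (g x₀)) :=
    (hg x₀ hx₀).tendsto.comp
      (tendsto_nhdsWithin_iff.2 ⟨hyψ, Eventually.of_forall fun k => (hy _).1⟩)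
  have hclose : Tendsto (fun k => dist (G (φ (ψ k)) (x (ψ k))) (g (y (ψ k)))) atTop (𝓝 0) := by
    simpa only [dist_self] using hGx.dist hgy
  obtain ⟨k, hk⟩ := (hclose.eventually (gt_mem_nhds hε)).exists
  exact (hfar (ψ k)).not_gt hk

theorem convTo_of_eventually_closeOn (K : CompactExhaustion X)
    {η : ℕ → ℝ} (hη : Tendsto η atTop (𝓝 0))
    (happrox : ∀ n, ∀ x ∈ A n, ∃ y ∈ Alim, dist x y ≤ η n) (hg : ContinuousOn g Alim)
    {J : ℕ → ℕ} (hJ : Tendsto J atTop atTop) {ε : ℕ → ℝ} (hε : Tendsto ε atTop (𝓝 0))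
    (hclose : ∀ᶠ n in atTop, CloseOn (A n) Alim (K (J n)) (η n) (ε n) (G n) g) :
    ConvTo A Alim G g := by
  intro x x₀ hx hx₀ hxt
  choose y hy hxy using fun n => happrox n (x n) (hx n)
  have hyt : Tendsto y atTop (𝓝 x₀) :=
    hxt.congr_dist (squeeze_zero (fun _ => dist_nonneg) hxy hη)
  have hgy : Tendsto (fun n => g (y n)) atTop (𝓝 (g x₀)) :=
    (hg x₀ hx₀).tendsto.comp (tendsto_nhdsWithin_iff.2 ⟨hyt, Eventually.of_forall hy⟩)
  obtain ⟨j₀, hj₀⟩ := K.exists_mem_nhds x₀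
  have hGg : ∀ᶠ n in atTop, dist (g (y n)) (G n (x n)) ≤ ε n := by
    filter_upwards [hclose, hJ.eventually_ge_atTop j₀, hxt hj₀, hyt hj₀] with n hn hjn hxn hyn
    rw [dist_comm]
    exact (hn (x n) ⟨hx n, K.subset hjn hxn⟩ (y n) ⟨hy n, K.subset hjn hyn⟩ (hxy n)).le
  exact hgy.congr_dist (squeeze_zero' (Eventually.of_forall fun _ => dist_nonneg) hGg hε)

end ConvTo

theorem diagonal_convTo_general
    {X : Type*} [MetricSpace X] [TopologicalSpace.SeparableSpace X] [LocallyCompactSpace X]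
    (A : ℕ → Set X) (Alim : Set X)
    (hAlim : IsClosed Alim)
    (hfin : ∀ n, EMetric.hausdorffEdist (A n) Alim ≠ ⊤)
    (htend : Tendsto (fun n => Metric.hausdorffDist (A n) Alim) atTop (𝓝 0))
    (F : ℕ → ℕ → X → ℝ)
    (fl : ℕ → X → ℝ) (hfl : ∀ m, ContinuousOn (fl m) Alim)
    (f : X → ℝ) (hf : ContinuousOn f Alim)
    (hconv : ∀ m, ConvTo A Alim (fun n => F m n) (fl m))
    (hunif : TendstoLocallyUniformlyOn fl f atTop Alim) :
    ∃ m : ℕ → ℕ, Tendsto m atTop atTop ∧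
      ConvTo A Alim (fun n => F (m n) n) f := by
  have : SecondCountableTopology X := UniformSpace.secondCountable_of_separable X
  let K := CompactExhaustion.choice X
  obtain ⟨η, hη, happrox⟩ := exists_rate_of_tendsto_hausdorffDist hfin htend
  have hreach := fun x₀ (hx₀ : x₀ ∈ Alim) =>
    exists_seq_tendsto_of_tendsto_hausdorffDist hfin htend hx₀
  have hlevel : ∀ j : ℕ, ∃ m ≥ j,
      ∀ᶠ n in atTop, CloseOn (A n) Alim (K j) (η n) (1 / (j + 1)) (F m n) f := by
    intro j
    have hhalf : (0 : ℝ) < 1 / (j + 1) / 2 := by positivity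
    have hunifK : TendstoUniformlyOn fl f atTop (Alim ∩ K j) :=
      (tendstoLocallyUniformlyOn_iff_tendstoUniformlyOn_of_compact
        ((K.isCompact j).inter_left hAlim)).1 (hunif.mono Set.inter_subset_left)
    obtain ⟨m, hjm, hm⟩ :=
      ((eventually_ge_atTop j).and (Metric.tendstoUniformlyOn_iff.1 hunifK _ hhalf)).exists
    refine ⟨m, hjm, ?_⟩
    filter_upwards [(hconv m).eventually_closeOn hAlim hreach (hfl m) (K.isCompact j) hη hhalf]
      with n hn
    simpa only [add_halves] using
      hn.trans_dist fun y hy => (dist_comm _ _).trans_lt (hm y hy)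
  choose M hjM hM using hlevel
  obtain ⟨J, hJ, hJM⟩ := exists_tendsto_atTop_eventually_diag hM
  exact ⟨fun n => M (J n), tendsto_atTop_mono (fun n => hjM (J n)) hJ,
    convTo_of_eventually_closeOn K hη happrox hf hJ
      (tendsto_one_div_add_atTop_nhds_zero_nat.comp hJ) hJM⟩

/-- (Diagonal extraction.) If `F m n ↣ fl m` as `n → ∞` for each `m`,
and `fl m → f` locally uniformly on `Alim` as `m → ∞`, then there exist `m(n) → ∞`
with `F (m n) n ↣ f` as `n → ∞`. -/
theorem diagonal_convTo
    {X : Type*} [MetricSpace X] [TopologicalSpace.SeparableSpace X] [LocallyCompactSpace X]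
    (A : ℕ → Set X) (Alim : Set X)
    (hA : ∀ n, IsClosed (A n)) (hAlim : IsClosed Alim)
    (hfin : ∀ n, EMetric.hausdorffEdist (A n) Alim ≠ ⊤)
    (htend : Tendsto (fun n => Metric.hausdorffDist (A n) Alim) atTop (𝓝 0))
    (F : ℕ → ℕ → X → ℝ) (hF : ∀ m n, ContinuousOn (F m n) (A n))
    (fl : ℕ → X → ℝ) (hfl : ∀ m, ContinuousOn (fl m) Alim)
    (f : X → ℝ) (hf : ContinuousOn f Alim)
    (hconv : ∀ m, ConvTo A Alim (fun n => F m n) (fl m))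
    (hunif : TendstoLocallyUniformlyOn fl f atTop Alim) :
    ∃ m : ℕ → ℕ, Tendsto m atTop atTop ∧
      ConvTo A Alim (fun n => F (m n) n) f :=
  diagonal_convTo_general A Alim hAlim hfin htend F fl hfl f hf hconv hunif
end

section
/- Let F be a generalized Sierpiński carpet and for m ≥ 0 let F_m be its level-m approximation domain. Fix j ≥ 1 and a set I of index pairs (i, s) with i ∈ {1,…,d}, s ∈ {0,1}. Define K = F \ ⋃_{(i,s)∈I} {x ∈ F : ρ(x, ∂_{i,s}F_0) < L_F^{-j}/2} and similarly K_m for F_m, where ∂_{i,s}F_0 is the face {x_i = s} of the unit cube. Then K and each K_m are path-connected. -/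
open Metric MeasureTheory Filter Topology

noncomputable section

/-- The closed subcube of `[0,1]^d` of side `L^{-n}` addressed by the word `w`. -/
def wordCell (d L : ℕ) {n : ℕ} (w : Fin n → (Fin d → Fin L)) :
    Set (EuclideanSpace ℝ (Fin d)) :=
  {x | ∀ i : Fin d,
    (∑ j : Fin n, (w j i : ℝ) / (L : ℝ) ^ ((j : ℕ) + 1)) ≤ x i ∧
      x i ≤ (∑ j : Fin n, (w j i : ℝ) / (L : ℝ) ^ ((j : ℕ) + 1)) + 1 / (L : ℝ) ^ n}

/-- The level-`n` approximation `F_n`: the union of the surviving cells,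
i.e. the cells addressed by words with all letters in the pattern `S`. -/
def approxSet (d L : ℕ) (S : Set (Fin d → Fin L)) (n : ℕ) :
    Set (EuclideanSpace ℝ (Fin d)) :=
  ⋃ w ∈ {w : Fin n → (Fin d → Fin L) | ∀ j, w j ∈ S}, wordCell d L w

/-- The generalized Sierpiński carpet `F = ⋂ₙ Fₙ`. -/
def carpetSet (d L : ℕ) (S : Set (Fin d → Fin L)) :
    Set (EuclideanSpace ℝ (Fin d)) :=
  ⋂ n, approxSet d L S n

/-- Conditions (SC1)–(SC4) on the pattern `S` of a generalized Sierpiński carpet. -/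
structure IsGSC (d L : ℕ) (S : Set (Fin d → Fin L)) : Prop where
  hd : 2 ≤ d
  hL : 3 ≤ L
  nonempty : S.Nonempty
  proper : S ≠ Set.univ
  /-- (SC1) symmetry under all isometries of the unit cube. -/
  symm : ∀ (p : Equiv.Perm (Fin d)) (ε : Fin d → Bool) (k : Fin d → Fin L),
    k ∈ S → (fun i => if ε i then (k (p i)).rev else k (p i)) ∈ S
  /-- (SC2) the interior of `F₁` is connected. -/
  conn : IsConnected (interior (approxSet d L S 1))
  /-- (SC3) non-diagonality. -/
  nondiag : ∀ n : ℕ, 1 ≤ n → ∀ c : Fin d → ℕ, (∀ i, c i + 2 ≤ L ^ n) →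
    (interior (approxSet d L S 1 ∩
      {x : EuclideanSpace ℝ (Fin d) |
        ∀ i, (c i : ℝ) / (L : ℝ) ^ n ≤ x i ∧ x i ≤ ((c i : ℝ) + 2) / (L : ℝ) ^ n})).Nonempty →
    IsConnected (interior (approxSet d L S 1 ∩
      {x : EuclideanSpace ℝ (Fin d) |
        ∀ i, (c i : ℝ) / (L : ℝ) ^ n ≤ x i ∧ x i ≤ ((c i : ℝ) + 2) / (L : ℝ) ^ n}))
  /-- (SC4) the bottom edge along the first coordinate axis is included. -/
  borders : ∀ j : Fin L,
    (fun i : Fin d => if (i : ℕ) = 0 then j else ⟨0, by omega⟩) ∈ S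

/-- The face `∂_{i,s} F₀` of the unit cube: `{x ∈ [0,1]^d : x_i = s}`. -/
def cubeFace (d : ℕ) (p : Fin d × Bool) : Set (EuclideanSpace ℝ (Fin d)) :=
  {y | (∀ i, 0 ≤ y i ∧ y i ≤ 1) ∧ y p.1 = (if p.2 then 1 else 0)}

/-!
`F` and every `F_m` are path connected. The edges of an admissible cell lie in `F`, since an edge
is the union of the same edges of the `L` subcells along it, whose letters lie in `S` by (SC1) and
(SC4). By (SC2) any two letters of `S` are linked by a chain of touching letters, so the lower
corners of consecutive cells in an address of `x ∈ F` are joined inside `F` by paths of size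
`O(L^{-n})`; run on the dyadic intervals `[1 - 2^{-n}, 1 - 2^{-n-1}]` they form a path to `x`.

The face neighbourhoods are removed by a retraction. Folding the `i`-th coordinate across
`x_i = L^{-j}/2` (or `x_i = 1 - L^{-j}/2`) maps `F_m` into itself, because reversing the base-`L`
digits of `x_i` from level `j` on is a symmetry of the pattern (SC1). The product of these folds is
continuous, and its image of `F` (resp. `F_m`) is exactly the set in question.
-/

section Chain

variable {E : Type*} [NormedAddCommGroup E]

lemma tsum_sub_telescope_eq {c v : ℕ → E} {N : ℕ}
    (hlt : ∀ n < N, v n = c (n + 1)) (hgt : ∀ n, N < n → v n = c n) :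
    c 0 + ∑' n, (v n - c n) = v N := by
  rw [tsum_eq_sum (s := Finset.range (N + 1)) fun n hn => by
      rw [hgt n (by simpa using hn), sub_self],
    Finset.sum_range_succ, Finset.sum_congr rfl fun n hn => by
      rw [hlt n (Finset.mem_range.mp hn)], Finset.sum_range_sub]
  abel

/-- The affine reparametrisation sending `[1 - 2⁻¹ ^ n, 1 - 2⁻¹ ^ (n + 1)]` onto `[0, 1]`. -/
def dyadicTime (n : ℕ) (t : ℝ) : ℝ := 2 ^ (n + 1) * (t - (1 - 2⁻¹ ^ n))

lemma continuous_dyadicTime (n : ℕ) : Continuous (dyadicTime n) := by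
  unfold dyadicTime; fun_prop

lemma dyadicTime_nonpos {n : ℕ} {t : ℝ} (ht : t ≤ 1 - 2⁻¹ ^ n) : dyadicTime n t ≤ 0 :=
  mul_nonpos_of_nonneg_of_nonpos (by positivity) (by linarith)

lemma one_le_dyadicTime {n : ℕ} {t : ℝ} (ht : 1 - 2⁻¹ ^ (n + 1) ≤ t) : 1 ≤ dyadicTime n t := by
  have hpow : (2 : ℝ) ^ (n + 1) * 2⁻¹ ^ (n + 1) = 1 := by rw [← mul_pow]; norm_num
  calc (1 : ℝ) = 2 ^ (n + 1) * 2⁻¹ ^ (n + 1) := hpow.symm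
    _ ≤ dyadicTime n t := by unfold dyadicTime; gcongr; linarith [pow_succ (2⁻¹ : ℝ) n]

lemma exists_dyadic_piece {t : ℝ} (ht : t < 1) :
    ∃ N : ℕ, (∀ n < N, 1 - 2⁻¹ ^ (n + 1) ≤ t) ∧ ∀ n, N < n → t ≤ 1 - 2⁻¹ ^ n := by
  classical
  have hmono : ∀ {m n : ℕ}, m ≤ n → (2⁻¹ : ℝ) ^ n ≤ 2⁻¹ ^ m :=
    pow_le_pow_of_le_one (by norm_num) (by norm_num)
  have hex : ∃ n : ℕ, t < 1 - (2⁻¹ : ℝ) ^ (n + 1) := by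
    obtain ⟨n, hn⟩ := exists_pow_lt_of_lt_one (sub_pos.mpr ht) (by norm_num : (2⁻¹ : ℝ) < 1)
    exact ⟨n, by linarith [hmono (show n ≤ n + 1 by omega)]⟩
  refine ⟨Nat.find hex, fun n hn => not_lt.mp (Nat.find_min hex hn), fun n hn => ?_⟩
  linarith [Nat.find_spec hex, hmono (show Nat.find hex + 1 ≤ n from hn)]

/-- The paths `p n`, run on the successive dyadic intervals, sum to a path by the Weierstrass
M-test. -/
theorem IsClosed.joinedIn_of_tendsto [CompleteSpace E] {F : Set E} (hF : IsClosed F) {c : ℕ → E}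
    {x : E} (hc : Tendsto c atTop (𝓝 x)) {u : ℕ → ℝ} (hu : Summable u)
    (p : ∀ n, Path (c n) (c (n + 1))) (hpF : ∀ n t, p n t ∈ F)
    (hpu : ∀ n t, ‖p n t - c n‖ ≤ u n) : JoinedIn F (c 0) x := by
  set g : ℕ → ℝ → E := fun n t => (p n).extend (dyadicTime n t)
  have hg_before : ∀ n t, t ≤ 1 - 2⁻¹ ^ n → g n t = c n :=
    fun n t ht => (p n).extend_of_le_zero (dyadicTime_nonpos ht)
  have hg_after : ∀ n t, 1 - 2⁻¹ ^ (n + 1) ≤ t → g n t = c (n + 1) :=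
    fun n t ht => (p n).extend_of_one_le (one_le_dyadicTime ht)
  set γ : ℝ → E := fun t => c 0 + ∑' n, (g n t - c n)
  have hγ_cont : Continuous γ := continuous_const.add <| continuous_tsum
    (fun n => ((p n).continuous_extend.comp (continuous_dyadicTime n)).sub continuous_const) hu
    fun n t => hpu n _
  have hγ_piece : ∀ t < 1, ∃ N, γ t = g N t := fun t ht => by
    obtain ⟨N, hlt, hgt⟩ := exists_dyadic_piece ht
    exact ⟨N, tsum_sub_telescope_eq (fun n hn => hg_after n t (hlt n hn))
      fun n hn => hg_before n t (hgt n hn)⟩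
  have hγ0 : γ 0 = c 0 := by
    refine (tsum_sub_telescope_eq (N := 0) (by simp) fun n _ => hg_before n 0 ?_).trans
      (hg_before 0 0 (by norm_num))
    simp [inv_le_one_of_one_le₀ (one_le_pow₀ (by norm_num : (1 : ℝ) ≤ 2))]
  have hγ1 : γ 1 = x := by
    have hsum : HasSum (fun n => c (n + 1) - c n) (x - c 0) := by
      refine (hasSum_iff_tendsto_nat_of_summable_norm (hu.of_nonneg_of_le (fun _ => norm_nonneg _)
        fun n => (p n).target ▸ hpu n 1)).mpr ?_
      simpa only [Finset.sum_range_sub] using hc.sub_const (c 0)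
    have hg1 : ∀ n, g n 1 = c (n + 1) := fun n => hg_after n 1 (by simp)
    simp only [γ, hg1, hsum.tsum_eq]
    abel
  have hγF : ∀ t ∈ Set.Icc (0 : ℝ) 1, γ t ∈ F := by
    rintro t ⟨-, ht1⟩
    rcases ht1.lt_or_eq with ht1 | rfl
    · obtain ⟨N, hN⟩ := hγ_piece t ht1
      exact hN ▸ hpF N _
    · exact hγ1 ▸ hF.mem_of_tendsto hc (Eventually.of_forall fun n => (p n).source ▸ hpF n 0)
  exact ⟨⟨⟨fun t => γ t, hγ_cont.comp continuous_subtype_val⟩, hγ0, hγ1⟩, fun t => hγF t t.2⟩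

end Chain

section Cells

variable {d L : ℕ}

lemma sum_geom_tail (hL : 0 < L) (j m : ℕ) :
    ∑ q : Fin m, (if j ≤ (q : ℕ) then ((L : ℝ) - 1) / (L : ℝ) ^ ((q : ℕ) + 1) else 0)
      = 1 / (L : ℝ) ^ min j m - 1 / (L : ℝ) ^ m := by
  have hL0 : (L : ℝ) ≠ 0 := by positivity
  induction m with
  | zero => simp
  | succ m ih =>
    rw [Fin.sum_univ_castSucc]
    simp only [Fin.val_castSucc, Fin.val_last, ih]
    by_cases hjm : j ≤ m
    · rw [if_pos hjm, min_eq_left hjm, min_eq_left (by omega : j ≤ m + 1)]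
      field_simp
      ring
    · rw [if_neg hjm, min_eq_right (by omega : m ≤ j), min_eq_right (by omega : m + 1 ≤ j)]
      ring

def cellBase (L : ℕ) {d n : ℕ} (w : Fin n → Fin d → Fin L) (i : Fin d) : ℝ :=
  ∑ q : Fin n, (w q i : ℝ) / (L : ℝ) ^ ((q : ℕ) + 1)

lemma mem_wordCell_iff {n : ℕ} {w : Fin n → Fin d → Fin L} {x : EuclideanSpace ℝ (Fin d)} :
    x ∈ wordCell d L w ↔ ∀ i, cellBase L w i ≤ x i ∧ x i ≤ cellBase L w i + 1 / (L : ℝ) ^ n :=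
  Iff.rfl

lemma cellBase_nonneg {n : ℕ} (w : Fin n → Fin d → Fin L) (i : Fin d) : 0 ≤ cellBase L w i :=
  Finset.sum_nonneg fun _ _ => by positivity

lemma cast_digit_le {L : ℕ} (v : Fin L) : (v : ℝ) ≤ (L : ℝ) - 1 := by
  have : (v : ℝ) + 1 ≤ L := by exact_mod_cast v.isLt
  linarith

lemma cellBase_add_le_one (hL : 0 < L) {n : ℕ} (w : Fin n → Fin d → Fin L) (i : Fin d) :
    cellBase L w i + 1 / (L : ℝ) ^ n ≤ 1 := by
  have hgeom := sum_geom_tail hL 0 n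
  simp only [zero_le, if_true, Nat.zero_min, pow_zero, div_one] at hgeom
  have : cellBase L w i ≤ 1 - 1 / (L : ℝ) ^ n :=
    hgeom ▸ Finset.sum_le_sum fun q _ => by gcongr; exact cast_digit_le _
  linarith

lemma mem_unitCube_of_mem_wordCell (hL : 0 < L) {n : ℕ} {w : Fin n → Fin d → Fin L}
    {x : EuclideanSpace ℝ (Fin d)} (hx : x ∈ wordCell d L w) (i : Fin d) : 0 ≤ x i ∧ x i ≤ 1 :=
  ⟨(cellBase_nonneg w i).trans (hx i).1, (hx i).2.trans (cellBase_add_le_one hL w i)⟩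

lemma mem_unitCube_of_mem_approxSet (hL : 0 < L) {S : Set (Fin d → Fin L)} {m : ℕ}
    {x : EuclideanSpace ℝ (Fin d)} (hx : x ∈ approxSet d L S m) (i : Fin d) :
    0 ≤ x i ∧ x i ≤ 1 := by
  obtain ⟨w, -, hxw⟩ := Set.mem_iUnion₂.mp hx
  exact mem_unitCube_of_mem_wordCell hL hxw i

lemma cellBase_snoc {n : ℕ} (w : Fin n → Fin d → Fin L) (k : Fin d → Fin L) (i : Fin d) :
    cellBase L (Fin.snoc w k : Fin (n + 1) → Fin d → Fin L) i
      = cellBase L w i + (k i : ℝ) / (L : ℝ) ^ (n + 1) := by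
  simp [cellBase, Fin.sum_univ_castSucc]

lemma mem_wordCell_snoc_iff {n : ℕ} {w : Fin n → Fin d → Fin L} {k : Fin d → Fin L}
    {x : EuclideanSpace ℝ (Fin d)} :
    x ∈ wordCell d L (Fin.snoc w k : Fin (n + 1) → Fin d → Fin L) ↔
      ∀ i, cellBase L w i + (k i : ℝ) / (L : ℝ) ^ (n + 1) ≤ x i ∧
        x i ≤ cellBase L w i + (k i : ℝ) / (L : ℝ) ^ (n + 1) + 1 / (L : ℝ) ^ (n + 1) := by
  simp only [mem_wordCell_iff, cellBase_snoc]

lemma wordCell_snoc_subset (hL : 0 < L) {n : ℕ} (w : Fin n → Fin d → Fin L) (k : Fin d → Fin L) :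
    wordCell d L (Fin.snoc w k : Fin (n + 1) → Fin d → Fin L) ⊆ wordCell d L w := by
  refine fun x hx => mem_wordCell_iff.mpr fun i => ?_
  obtain ⟨h1, h2⟩ := mem_wordCell_snoc_iff.mp hx i
  have hk : (k i : ℝ) / (L : ℝ) ^ (n + 1) + 1 / (L : ℝ) ^ (n + 1) ≤ 1 / (L : ℝ) ^ n := by
    rw [← add_div, pow_succ, div_le_div_iff₀ (by positivity) (by positivity)]
    have : (k i : ℝ) + 1 ≤ L := by exact_mod_cast (k i).isLt
    nlinarith [pow_pos (Nat.cast_pos.mpr hL : (0 : ℝ) < L) n]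
  exact ⟨le_trans (le_add_of_nonneg_right (by positivity)) h1, by linarith⟩

lemma snoc_mem {S : Set (Fin d → Fin L)} {n : ℕ} {w : Fin n → Fin d → Fin L} (hw : ∀ q, w q ∈ S)
    {k : Fin d → Fin L} (hk : k ∈ S) (q : Fin (n + 1)) :
    (Fin.snoc w k : Fin (n + 1) → Fin d → Fin L) q ∈ S :=
  Fin.lastCases (by simpa using hk) (fun q => by simpa using hw q) q

lemma wordCell_subset_approxSet (hL : 0 < L) {S : Set (Fin d → Fin L)} {n : ℕ}
    {w : Fin n → Fin d → Fin L} (hw : ∀ q, w q ∈ S) {m : ℕ} (hm : m ≤ n) :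
    wordCell d L w ⊆ approxSet d L S m := by
  induction n generalizing m with
  | zero => obtain rfl := Nat.le_zero.mp hm; exact fun _ hx => Set.mem_biUnion hw hx
  | succ n ih =>
    rcases hm.lt_or_eq with hm | rfl
    · rw [← Fin.snoc_init_self w]
      exact (wordCell_snoc_subset hL _ _).trans (ih (fun q => hw _) (by omega))
    · exact fun _ hx => Set.mem_biUnion hw hx

lemma carpetSet_subset_approxSet {S : Set (Fin d → Fin L)} (m : ℕ) :
    carpetSet d L S ⊆ approxSet d L S m :=
  Set.iInter_subset _ m

lemma wordCell_eq_iInter {n : ℕ} (w : Fin n → Fin d → Fin L) :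
    wordCell d L w = ⋂ i, (EuclideanSpace.proj i : EuclideanSpace ℝ (Fin d) →L[ℝ] ℝ) ⁻¹'
      Set.Icc (cellBase L w i) (cellBase L w i + 1 / (L : ℝ) ^ n) := by
  ext x; simp [mem_wordCell_iff]

lemma convex_wordCell {n : ℕ} (w : Fin n → Fin d → Fin L) : Convex ℝ (wordCell d L w) := by
  rw [wordCell_eq_iInter]
  exact convex_iInter fun i => (convex_Icc _ _).linear_preimage (EuclideanSpace.proj i).toLinearMap

lemma isClosed_wordCell {n : ℕ} (w : Fin n → Fin d → Fin L) : IsClosed (wordCell d L w) := by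
  rw [wordCell_eq_iInter]
  exact isClosed_iInter fun i => isClosed_Icc.preimage (EuclideanSpace.proj i).continuous

lemma isClosed_approxSet (S : Set (Fin d → Fin L)) (n : ℕ) : IsClosed (approxSet d L S n) :=
  (Set.toFinite _).isClosed_biUnion fun w _ => isClosed_wordCell w

lemma isClosed_carpetSet (S : Set (Fin d → Fin L)) : IsClosed (carpetSet d L S) :=
  isClosed_iInter (isClosed_approxSet S)

end Cells

section Letters

variable {d L : ℕ} {S : Set (Fin d → Fin L)}

lemma IsGSC.L_pos (h : IsGSC d L S) : 0 < L := by have := h.hL; omega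

lemma IsGSC.d_pos (h : IsGSC d L S) : 0 < d := by have := h.hd; omega

def extremeDigit (hL : 0 < L) (b : Bool) : Fin L := if b then ⟨L - 1, by omega⟩ else ⟨0, hL⟩

lemma cast_extremeDigit (hL : 0 < L) (b : Bool) :
    ((extremeDigit hL b : ℕ) : ℝ) = if b then (L : ℝ) - 1 else 0 := by
  cases b <;> simp [extremeDigit, Nat.cast_sub (Nat.one_le_of_lt hL)]

/-- The letters of the subcells along an edge of a cell parallel to the axis `i0`. -/
def edgeLetter (hL : 0 < L) (i0 : Fin d) (v : Fin L) (b : Fin d → Bool) : Fin d → Fin L :=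
  fun i => if i = i0 then v else extremeDigit hL (b i)

lemma IsGSC.rev_mem (h : IsGSC d L S) (ε : Fin d → Bool) {k : Fin d → Fin L} (hk : k ∈ S) :
    (fun i => if ε i then (k i).rev else k i) ∈ S := by
  simpa using h.symm (Equiv.refl _) ε k hk

/-- (SC4) puts the edge letters of the first axis in `S`; (SC1) moves them to any axis. -/
lemma IsGSC.edgeLetter_mem (h : IsGSC d L S) (i0 : Fin d) (v : Fin L) (b : Fin d → Bool) :
    edgeLetter h.L_pos i0 v b ∈ S := by
  classical
  set z : Fin d := ⟨0, h.d_pos⟩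
  convert h.symm (Equiv.swap z i0) (fun i => decide (i ≠ i0) && b i) _ (h.borders v) using 1
  funext i
  by_cases hi : i = i0
  · subst hi; simp [edgeLetter, z]
  · have hz : ((Equiv.swap z i0 i : Fin d) : ℕ) ≠ 0 := fun h0 => hi <| by
      simpa [Equiv.swap_apply_eq_iff] using (Fin.ext h0 : Equiv.swap z i0 i = z)
    cases hb : b i <;> simp [edgeLetter, extremeDigit, hi, hz, hb, Fin.rev]

end Letters

section Skeleton

variable {d L : ℕ} {S : Set (Fin d → Fin L)}

def cornerCoord (L : ℕ) {d n : ℕ} (w : Fin n → Fin d → Fin L) (b : Fin d → Bool) (i : Fin d) :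
    ℝ :=
  cellBase L w i + if b i then 1 / (L : ℝ) ^ n else 0

def cornerPt (L : ℕ) {d n : ℕ} (w : Fin n → Fin d → Fin L) (b : Fin d → Bool) :
    EuclideanSpace ℝ (Fin d) :=
  WithLp.toLp 2 (cornerCoord L w b)

def cellEdge (d L : ℕ) {n : ℕ} (w : Fin n → Fin d → Fin L) (i0 : Fin d) (b : Fin d → Bool) :
    Set (EuclideanSpace ℝ (Fin d)) :=
  {x | x ∈ wordCell d L w ∧ ∀ i ≠ i0, x i = cornerCoord L w b i}

lemma cornerPt_mem_wordCell {n : ℕ} (w : Fin n → Fin d → Fin L) (b : Fin d → Bool) :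
    cornerPt L w b ∈ wordCell d L w :=
  mem_wordCell_iff.mpr fun i => by
    simp only [cornerPt, PiLp.toLp_apply, cornerCoord]
    split_ifs <;> constructor <;> simp

lemma cornerPt_mem_cellEdge {n : ℕ} (w : Fin n → Fin d → Fin L) (i0 : Fin d)
    {b b' : Fin d → Bool} (hbb' : ∀ i ≠ i0, b' i = b i) :
    cornerPt L w b' ∈ cellEdge d L w i0 b :=
  ⟨cornerPt_mem_wordCell w b', fun i hi => by simp [cornerPt, cornerCoord, hbb' i hi]⟩

lemma convex_cellEdge {n : ℕ} (w : Fin n → Fin d → Fin L) (i0 : Fin d) (b : Fin d → Bool) :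
    Convex ℝ (cellEdge d L w i0 b) := by
  intro x hx y hy s t hs ht hst
  refine ⟨convex_wordCell w hx.1 hy.1 hs ht hst, fun i hi => ?_⟩
  simp [hx.2 i hi, hy.2 i hi, ← add_mul, hst]

lemma exists_fin_le_le (hL : 0 < L) {s : ℝ} (h0 : 0 ≤ s) (hs : s ≤ L) :
    ∃ v : Fin L, (v : ℝ) ≤ s ∧ s ≤ v + 1 := by
  rcases lt_or_ge s (L - 1) with hlt | hge
  · have hfl : ⌊s⌋₊ < L := by
      have := Nat.floor_le h0
      exact_mod_cast (show (⌊s⌋₊ : ℝ) < L by linarith)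
    exact ⟨⟨⌊s⌋₊, hfl⟩, Nat.floor_le h0, (Nat.lt_floor_add_one s).le⟩
  · exact ⟨⟨L - 1, by omega⟩, by simp [Nat.cast_sub (Nat.one_le_of_lt hL)]; linarith,
      by simp [Nat.cast_sub (Nat.one_le_of_lt hL)]; linarith⟩

lemma exists_mem_cellEdge_snoc (hL : 0 < L) {n : ℕ} {w : Fin n → Fin d → Fin L} {i0 : Fin d}
    {b : Fin d → Bool} {x : EuclideanSpace ℝ (Fin d)} (hx : x ∈ cellEdge d L w i0 b) :
    ∃ v : Fin L, x ∈ cellEdge d L (Fin.snoc w (edgeLetter hL i0 v b) : Fin (n + 1) → _) i0 b := by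
  have hLpos : (0 : ℝ) < L := Nat.cast_pos.mpr hL
  have hP : (0 : ℝ) < (L : ℝ) ^ (n + 1) := by positivity
  have hstep : 1 / (L : ℝ) ^ n = (L : ℝ) / (L : ℝ) ^ (n + 1) := by
    rw [pow_succ]; field_simp
  obtain ⟨h1, h2⟩ := mem_wordCell_iff.mp hx.1 i0
  obtain ⟨v, hv1, hv2⟩ := exists_fin_le_le hL (s := (x i0 - cellBase L w i0) * L ^ (n + 1))
    (by nlinarith) (by rw [← le_div_iff₀ hP, ← hstep]; linarith)
  rw [← div_le_iff₀ hP] at hv1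
  rw [← le_div_iff₀ hP, add_div] at hv2
  refine ⟨v, mem_wordCell_snoc_iff.mpr fun i => ?_, fun i hi => ?_⟩
  · by_cases hi : i = i0
    · subst hi
      simp only [edgeLetter, if_pos]
      constructor <;> linarith
    · rw [hx.2 i hi]
      simp only [cornerCoord, edgeLetter, if_neg hi, cast_extremeDigit, hstep]
      split_ifs <;> constructor <;> ring_nf <;> simp <;> positivity
  · rw [hx.2 i hi]
    simp only [cornerCoord, cellBase_snoc, edgeLetter, if_neg hi, cast_extremeDigit, hstep]
    split_ifs <;> ring

lemma IsGSC.cellEdge_subset_approxSet (h : IsGSC d L S) {n : ℕ} {w : Fin n → Fin d → Fin L}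
    (hw : ∀ q, w q ∈ S) (i0 : Fin d) (b : Fin d → Bool) (m : ℕ) :
    cellEdge d L w i0 b ⊆ approxSet d L S m := by
  rcases le_total m n with hmn | hnm
  · exact fun x hx => wordCell_subset_approxSet h.L_pos hw hmn hx.1
  obtain ⟨k, rfl⟩ := Nat.exists_eq_add_of_le hnm
  clear hnm
  induction k generalizing n with
  | zero => exact fun x hx => wordCell_subset_approxSet h.L_pos hw le_rfl hx.1
  | succ k ih =>
    intro x hx
    obtain ⟨v, hv⟩ := exists_mem_cellEdge_snoc h.L_pos hx
    simpa [Nat.add_right_comm, Nat.add_assoc] using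
      ih (snoc_mem hw (h.edgeLetter_mem i0 v b)) hv

lemma IsGSC.cellEdge_subset_carpetSet (h : IsGSC d L S) {n : ℕ} {w : Fin n → Fin d → Fin L}
    (hw : ∀ q, w q ∈ S) (i0 : Fin d) (b : Fin d → Bool) :
    cellEdge d L w i0 b ⊆ carpetSet d L S :=
  fun _ hx => Set.mem_iInter.mpr fun m => h.cellEdge_subset_approxSet hw i0 b m hx

lemma IsGSC.cornerPt_mem_carpetSet (h : IsGSC d L S) {n : ℕ} {w : Fin n → Fin d → Fin L}
    (hw : ∀ q, w q ∈ S) (b : Fin d → Bool) : cornerPt L w b ∈ carpetSet d L S :=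
  h.cellEdge_subset_carpetSet hw ⟨0, h.d_pos⟩ b
    (cornerPt_mem_cellEdge w _ fun _ _ => rfl)

lemma IsGSC.cornerPt_joinedIn (h : IsGSC d L S) {n : ℕ} {w : Fin n → Fin d → Fin L}
    (hw : ∀ q, w q ∈ S) (b b' : Fin d → Bool) :
    JoinedIn (carpetSet d L S ∩ wordCell d L w) (cornerPt L w b) (cornerPt L w b') := by
  classical
  suffices ∀ T : Finset (Fin d), ∀ b, (∀ i ∉ T, b i = b' i) →
      JoinedIn (carpetSet d L S ∩ wordCell d L w) (cornerPt L w b) (cornerPt L w b') from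
    this Finset.univ b fun i hi => absurd (Finset.mem_univ i) hi
  intro T
  induction T using Finset.induction with
  | empty =>
    intro b hb
    obtain rfl : b = b' := funext fun i => hb i (Finset.notMem_empty i)
    exact JoinedIn.refl ⟨h.cornerPt_mem_carpetSet hw b, cornerPt_mem_wordCell w b⟩
  | @insert i0 T hi0 ih =>
    intro b hb
    set b'' := Function.update b i0 (b' i0)
    have hb'' : ∀ i ≠ i0, b'' i = b i := fun i hi => Function.update_of_ne hi _ _
    have hedge : segment ℝ (cornerPt L w b) (cornerPt L w b'') ⊆ cellEdge d L w i0 b :=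
      (convex_cellEdge w i0 b).segment_subset (cornerPt_mem_cellEdge w i0 fun _ _ => rfl)
        (cornerPt_mem_cellEdge w i0 hb'')
    have hstep : JoinedIn (carpetSet d L S ∩ wordCell d L w) (cornerPt L w b) (cornerPt L w b'') :=
      .of_segment_subset fun y hy =>
        ⟨h.cellEdge_subset_carpetSet hw i0 b (hedge hy), (hedge hy).1⟩
    refine hstep.trans (ih b'' fun i hi => ?_)
    by_cases hii : i = i0
    · subst hii; simp [b'']
    · rw [hb'' i hii]; exact hb i (by simp [hii, hi])

end Skeleton

section Touching

variable {d L : ℕ} {S : Set (Fin d → Fin L)}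

/-- The level-one cells of the letters `k` and `k'` meet. -/
def Touch (k k' : Fin d → Fin L) : Prop :=
  ∀ i, (k i : ℕ) ≤ k' i + 1 ∧ (k' i : ℕ) ≤ k i + 1

def letterCell (d L : ℕ) (a : Fin d → Fin L) : Set (EuclideanSpace ℝ (Fin d)) :=
  wordCell d L (fun _ : Fin 1 => a)

lemma mem_letterCell_iff {a : Fin d → Fin L} {x : EuclideanSpace ℝ (Fin d)} :
    x ∈ letterCell d L a ↔ ∀ i, (a i : ℝ) / L ≤ x i ∧ x i ≤ (a i : ℝ) / L + 1 / L := by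
  simp [letterCell, mem_wordCell_iff, cellBase]

lemma approxSet_one_eq : approxSet d L S 1 = ⋃ a ∈ S, letterCell d L a := by
  ext x
  simp only [approxSet, letterCell, Set.mem_iUnion, Set.mem_ofPred_eq, exists_prop]
  constructor
  · rintro ⟨w, hw, hx⟩
    exact ⟨w 0, hw 0, by rwa [show (fun _ : Fin 1 => w 0) = w from funext fun q => by
      rw [Subsingleton.elim q 0]]⟩
  · rintro ⟨a, ha, hx⟩
    exact ⟨_, fun _ => ha, hx⟩

lemma Touch.of_mem_letterCell (hL : 0 < L) {a b : Fin d → Fin L} {x : EuclideanSpace ℝ (Fin d)}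
    (hxa : x ∈ letterCell d L a) (hxb : x ∈ letterCell d L b) : Touch a b := by
  have hLpos : (0 : ℝ) < L := Nat.cast_pos.mpr hL
  intro i
  obtain ⟨ha1, ha2⟩ := mem_letterCell_iff.mp hxa i
  obtain ⟨hb1, hb2⟩ := mem_letterCell_iff.mp hxb i
  rw [← add_div] at ha2 hb2
  have h1 : (a i : ℝ) ≤ b i + 1 := (div_le_div_iff_of_pos_right hLpos).mp (ha1.trans hb2)
  have h2 : (b i : ℝ) ≤ a i + 1 := (div_le_div_iff_of_pos_right hLpos).mp (hb1.trans ha2)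
  exact ⟨by exact_mod_cast h1, by exact_mod_cast h2⟩

def letterCenter (L : ℕ) {d : ℕ} (a : Fin d → Fin L) : EuclideanSpace ℝ (Fin d) :=
  WithLp.toLp 2 fun i => ((a i : ℝ) + 1 / 2) / L

lemma ball_letterCenter_subset (hL : 0 < L) (a : Fin d → Fin L) :
    ball (letterCenter L a) (1 / (2 * L)) ⊆ letterCell d L a := by
  have hLpos : (0 : ℝ) < L := Nat.cast_pos.mpr hL
  intro x hx
  refine mem_letterCell_iff.mpr fun i => ?_
  have hi := (PiLp.dist_apply_le x (letterCenter L a) i).trans_lt (mem_ball.mp hx)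
  rw [Real.dist_eq, abs_lt] at hi
  simp only [letterCenter, PiLp.toLp_apply] at hi
  constructor <;> field_simp at hi ⊢ <;> nlinarith

lemma letterCenter_mem_interior (hL : 0 < L) {a : Fin d → Fin L} (ha : a ∈ S) :
    letterCenter L a ∈ interior (approxSet d L S 1) := by
  refine interior_mono ?_ (isOpen_ball.subset_interior_iff.mpr (ball_letterCenter_subset hL a)
    (mem_ball_self (by positivity)))
  exact approxSet_one_eq (S := S) ▸ Set.subset_biUnion_of_mem ha

/-- (SC2) in combinatorial form. -/
lemma IsGSC.reflTransGen_touch (h : IsGSC d L S) {k k' : Fin d → Fin L} (hk : k ∈ S)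
    (hk' : k' ∈ S) : Relation.ReflTransGen (fun a b => a ∈ S ∧ b ∈ S ∧ Touch a b) k k' := by
  set A := {a | Relation.ReflTransGen (fun a b => a ∈ S ∧ b ∈ S ∧ Touch a b) k a}
  set U := ⋃ a ∈ S ∩ A, letterCell d L a
  set V := ⋃ a ∈ S \ A, letterCell d L a
  have hUV : ∀ x ∈ U, x ∉ V := by
    simp only [U, V, Set.mem_iUnion₂]
    rintro x ⟨a, ⟨ha, haA⟩, hxa⟩ ⟨b, ⟨hb, hbA⟩, hxb⟩
    exact hbA (haA.tail ⟨ha, hb, Touch.of_mem_letterCell h.L_pos hxa hxb⟩)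
  have hcover : interior (approxSet d L S 1) ⊆ U ∪ V := by
    refine interior_subset.trans fun x hx => ?_
    obtain ⟨a, ha, hxa⟩ := Set.mem_iUnion₂.mp (approxSet_one_eq ▸ hx)
    by_cases haA : a ∈ A
    · exact Or.inl (Set.mem_biUnion ⟨ha, haA⟩ hxa)
    · exact Or.inr (Set.mem_biUnion ⟨ha, haA⟩ hxa)
  have hcenter : ∀ a ∈ S, letterCenter L a ∈ letterCell d L a := fun a _ =>
    ball_letterCenter_subset h.L_pos a (mem_ball_self (by have := h.L_pos; positivity))
  have hkU : letterCenter L k ∈ U := Set.mem_biUnion ⟨hk, .refl⟩ (hcenter k hk)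
  rcases isPreconnected_iff_subset_of_disjoint_closed.mp h.conn.isPreconnected U V
    ((Set.toFinite _).isClosed_biUnion fun _ _ => isClosed_wordCell _)
    ((Set.toFinite _).isClosed_biUnion fun _ _ => isClosed_wordCell _) hcover
    (Set.eq_empty_of_forall_notMem fun x hx => hUV x hx.2.1 hx.2.2) with hU | hV
  · by_contra hk'A
    exact hUV _ (hU (letterCenter_mem_interior h.L_pos hk'))
      (Set.mem_biUnion ⟨hk', hk'A⟩ (hcenter k' hk'))
  · exact absurd (hV (letterCenter_mem_interior h.L_pos hk)) (hUV _ hkU)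

end Touching

section Joins

variable {d L : ℕ} {S : Set (Fin d → Fin L)}

lemma IsGSC.zero_mem (h : IsGSC d L S) : (fun _ => ⟨0, h.L_pos⟩ : Fin d → Fin L) ∈ S := by
  convert h.edgeLetter_mem ⟨0, h.d_pos⟩ ⟨0, h.L_pos⟩ fun _ => false using 1
  funext i
  simp [edgeLetter, extremeDigit]

lemma cornerPt_snoc_zero (hL : 0 < L) {n : ℕ} (w : Fin n → Fin d → Fin L) :
    cornerPt L (Fin.snoc w (fun _ => ⟨0, hL⟩) : Fin (n + 1) → _) (fun _ => false) =
      cornerPt L w (fun _ => false) := by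
  ext i
  simp [cornerPt, cornerCoord, cellBase_snoc]

/-- Touching subcells share a corner, through which their lower corners are joined. -/
lemma IsGSC.cornerPt_snoc_joinedIn_of_touch (h : IsGSC d L S) {n : ℕ}
    {w : Fin n → Fin d → Fin L} (hw : ∀ q, w q ∈ S) {k k' : Fin d → Fin L} (hk : k ∈ S)
    (hk' : k' ∈ S) (hkk' : Touch k k') :
    JoinedIn (carpetSet d L S ∩ wordCell d L w)
      (cornerPt L (Fin.snoc w k : Fin (n + 1) → _) fun _ => false)
      (cornerPt L (Fin.snoc w k' : Fin (n + 1) → _) fun _ => false) := by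
  have hshared : cornerPt L (Fin.snoc w k : Fin (n + 1) → _) (fun i => decide (k i < k' i)) =
      cornerPt L (Fin.snoc w k' : Fin (n + 1) → _) (fun i => decide (k' i < k i)) := by
    ext i
    have hdigit : (k i : ℝ) + (if k i < k' i then 1 else 0) =
        k' i + (if k' i < k i then 1 else 0) := by
      obtain ⟨h1, h2⟩ := hkk' i
      rcases lt_trichotomy (k i) (k' i) with hlt | heq | hgt
      · simp [hlt, hlt.not_gt]; exact_mod_cast (by omega : (k i : ℕ) + 1 = k' i)
      · simp [heq]
      · simp [hgt, hgt.not_gt]; exact_mod_cast (by omega : (k i : ℕ) = k' i + 1)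
    simp only [cornerPt, cornerCoord, cellBase_snoc, PiLp.toLp_apply, decide_eq_true_eq]
    have := congrArg (· / (L : ℝ) ^ (n + 1)) hdigit
    simp only [add_div, ite_div, zero_div] at this
    linarith
  have hsub : ∀ k, carpetSet d L S ∩ wordCell d L (Fin.snoc w k : Fin (n + 1) → _) ⊆
      carpetSet d L S ∩ wordCell d L w :=
    fun k => Set.inter_subset_inter_right _ (wordCell_snoc_subset h.L_pos w k)
  have j1 := (h.cornerPt_joinedIn (snoc_mem hw hk) (fun _ => false)
    (fun i => decide (k i < k' i))).mono (hsub k)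
  have j2 := (h.cornerPt_joinedIn (snoc_mem hw hk') (fun i => decide (k' i < k i))
    (fun _ => false)).mono (hsub k')
  exact (hshared ▸ j1).trans j2

lemma IsGSC.cornerPt_snoc_joinedIn (h : IsGSC d L S) {n : ℕ} {w : Fin n → Fin d → Fin L}
    (hw : ∀ q, w q ∈ S) {k : Fin d → Fin L} (hk : k ∈ S) :
    JoinedIn (carpetSet d L S ∩ wordCell d L w) (cornerPt L w fun _ => false)
      (cornerPt L (Fin.snoc w k : Fin (n + 1) → _) fun _ => false) := by
  have hchain := h.reflTransGen_touch h.zero_mem hk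
  clear hk
  induction hchain with
  | refl =>
    rw [cornerPt_snoc_zero]
    exact JoinedIn.refl ⟨h.cornerPt_mem_carpetSet hw _, cornerPt_mem_wordCell w _⟩
  | tail _ hbc ih => exact ih.trans (h.cornerPt_snoc_joinedIn_of_touch hw hbc.1 hbc.2.1 hbc.2.2)

lemma cornerPt_eq_zero_of_length_zero (w : Fin 0 → Fin d → Fin L) :
    cornerPt L w (fun _ => false) = 0 := by
  ext i; simp [cornerPt, cornerCoord, cellBase]

lemma IsGSC.zero_mem_carpetSet (h : IsGSC d L S) : 0 ∈ carpetSet d L S :=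
  cornerPt_eq_zero_of_length_zero Fin.elim0 ▸ h.cornerPt_mem_carpetSet (fun q => q.elim0) _

lemma IsGSC.cornerPt_joinedIn_zero (h : IsGSC d L S) {n : ℕ} {w : Fin n → Fin d → Fin L}
    (hw : ∀ q, w q ∈ S) : JoinedIn (carpetSet d L S) 0 (cornerPt L w fun _ => false) := by
  induction n with
  | zero =>
    rw [cornerPt_eq_zero_of_length_zero w]
    exact JoinedIn.refl h.zero_mem_carpetSet
  | succ n ih =>
    rw [← Fin.snoc_init_self w]
    exact (ih fun q => hw _).trans
      ((h.cornerPt_snoc_joinedIn (fun q => hw _) (hw _)).mono Set.inter_subset_left)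

end Joins

section PathConnected

variable {d L : ℕ} {S : Set (Fin d → Fin L)}

lemma snoc_restrict_eq {α : Type*} (f : ℕ → α) (n : ℕ) :
    (Fin.snoc (fun q : Fin n => f q) (f n) : Fin (n + 1) → α) = fun q : Fin (n + 1) => f q := by
  funext q
  refine Fin.lastCases ?_ (fun q => ?_) q <;> simp

/-- König's lemma. -/
lemma IsGSC.exists_address (h : IsGSC d L S) {x : EuclideanSpace ℝ (Fin d)}
    (hx : x ∈ carpetSet d L S) :
    ∃ f : ℕ → Fin d → Fin L, (∀ q, f q ∈ S) ∧ ∀ n, x ∈ wordCell d L fun q : Fin n => f q := by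
  classical
  set C : ℕ → Set (ℕ → Fin d → Fin L) := fun n =>
    {f | (∀ q : Fin n, f q ∈ S) ∧ x ∈ wordCell d L fun q : Fin n => f q}
  have hanti : ∀ n, C (n + 1) ⊆ C n := fun n f hf =>
    ⟨fun q => by simpa using hf.1 q.castSucc, by
      have := wordCell_snoc_subset h.L_pos (fun q : Fin n => f q) (f n)
      rw [snoc_restrict_eq] at this
      exact this hf.2⟩
  have hne : ∀ n, (C n).Nonempty := fun n => by
    obtain ⟨w, hw, hxw⟩ := Set.mem_iUnion₂.mp (carpetSet_subset_approxSet n hx)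
    refine ⟨fun q => if hq : q < n then w ⟨q, hq⟩ else fun _ => ⟨0, h.L_pos⟩, ?_, ?_⟩
    · simpa using hw
    · simpa using hxw
  have hclosed : ∀ n, IsClosed (C n) := fun n =>
    (isClosed_discrete {w : Fin n → Fin d → Fin L | (∀ q, w q ∈ S) ∧ x ∈ wordCell d L w}).preimage
      (f := fun (f : ℕ → Fin d → Fin L) (q : Fin n) => f q)
      (continuous_pi fun q => continuous_apply (q : ℕ))
  obtain ⟨f, hf⟩ := IsCompact.nonempty_iInter_of_sequence_nonempty_isCompact_isClosed C hanti hne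
    (hclosed 0).isCompact hclosed
  have hfC : ∀ n, f ∈ C n := Set.mem_iInter.mp hf
  exact ⟨f, fun q => by simpa using (hfC (q + 1)).1 (Fin.last q), fun n => (hfC n).2⟩

lemma norm_sub_le_of_mem_wordCell {n : ℕ} {w : Fin n → Fin d → Fin L}
    {y z : EuclideanSpace ℝ (Fin d)} (hy : y ∈ wordCell d L w) (hz : z ∈ wordCell d L w) :
    ‖y - z‖ ≤ d * ((L : ℝ)⁻¹) ^ n := by
  set r : ℝ := ((L : ℝ)⁻¹) ^ n
  have hr : 0 ≤ r := by positivity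
  have hcoord : ∀ i, ‖(y - z) i‖ ^ 2 ≤ r ^ 2 := fun i => by
    obtain ⟨hy1, hy2⟩ := mem_wordCell_iff.mp hy i
    obtain ⟨hz1, hz2⟩ := mem_wordCell_iff.mp hz i
    rw [one_div, ← inv_pow] at hy2 hz2
    simpa [sq_abs] using sq_le_sq' (by linarith) (by linarith : y i - z i ≤ r)
  have hd : (d : ℝ) ≤ (d : ℝ) ^ 2 := by
    rcases Nat.eq_zero_or_pos d with rfl | hd
    · simp
    · nlinarith [(Nat.one_le_cast (α := ℝ)).mpr hd]
  calc ‖y - z‖ = √(∑ i, ‖(y - z) i‖ ^ 2) := EuclideanSpace.norm_eq _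
    _ ≤ √(((d : ℝ) * r) ^ 2) := Real.sqrt_le_sqrt <| by
      calc ∑ i, ‖(y - z) i‖ ^ 2 ≤ ∑ _i : Fin d, r ^ 2 := Finset.sum_le_sum fun i _ => hcoord i
        _ = d * r ^ 2 := by simp
        _ ≤ (d * r) ^ 2 := by rw [mul_pow]; exact mul_le_mul_of_nonneg_right hd (by positivity)
    _ = d * r := Real.sqrt_sq (by positivity)

lemma IsGSC.joinedIn_carpetSet_zero (h : IsGSC d L S) {x : EuclideanSpace ℝ (Fin d)}
    (hx : x ∈ carpetSet d L S) : JoinedIn (carpetSet d L S) 0 x := by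
  obtain ⟨f, hfS, hfx⟩ := h.exists_address hx
  have hw : ∀ n (q : Fin n), f q ∈ S := fun n q => hfS q
  set c : ℕ → EuclideanSpace ℝ (Fin d) := fun n => cornerPt L (fun q : Fin n => f q) fun _ => false
  have hjoin : ∀ n,
      JoinedIn (carpetSet d L S ∩ wordCell d L fun q : Fin n => f q) (c n) (c (n + 1)) :=
    fun n => by simpa only [c, snoc_restrict_eq] using h.cornerPt_snoc_joinedIn (hw n) (hfS n)
  have hLinv : (L : ℝ)⁻¹ < 1 :=
    inv_lt_one_of_one_lt₀ (by exact_mod_cast (by have := h.hL; omega : 1 < L))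
  have hbound : ∀ n, ∀ y ∈ wordCell d L (fun q : Fin n => f q), ‖y - c n‖ ≤ d * ((L : ℝ)⁻¹) ^ n :=
    fun n y hy => norm_sub_le_of_mem_wordCell hy (cornerPt_mem_wordCell _ _)
  have htend : Tendsto c atTop (𝓝 x) := by
    refine tendsto_iff_norm_sub_tendsto_zero.mpr (squeeze_zero (fun _ => norm_nonneg _)
      (fun n => norm_sub_rev x (c n) ▸ hbound n x (hfx n)) ?_)
    simpa using (tendsto_pow_atTop_nhds_zero_of_lt_one (by positivity) hLinv).const_mul (d : ℝ)
  exact cornerPt_eq_zero_of_length_zero (fun q : Fin 0 => f q) ▸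
    (isClosed_carpetSet S).joinedIn_of_tendsto htend
    ((summable_geometric_of_lt_one (by positivity) hLinv).mul_left (d : ℝ))
    (fun n => (hjoin n).somePath) (fun n t => ((hjoin n).somePath_mem t).1)
    (fun n t => hbound n _ ((hjoin n).somePath_mem t).2)

lemma IsGSC.isPathConnected_carpetSet (h : IsGSC d L S) : IsPathConnected (carpetSet d L S) :=
  ⟨0, h.zero_mem_carpetSet, fun _ hx => h.joinedIn_carpetSet_zero hx⟩

lemma IsGSC.isPathConnected_approxSet (h : IsGSC d L S) (m : ℕ) :
    IsPathConnected (approxSet d L S m) := by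
  refine ⟨0, carpetSet_subset_approxSet m h.zero_mem_carpetSet, fun {y} hy => ?_⟩
  obtain ⟨w, hw, hyw⟩ := Set.mem_iUnion₂.mp hy
  have hcell : wordCell d L w ⊆ approxSet d L S m := wordCell_subset_approxSet h.L_pos hw le_rfl
  exact ((h.cornerPt_joinedIn_zero hw).mono (carpetSet_subset_approxSet m)).trans
    (.of_segment_subset (((convex_wordCell w).segment_subset
      (cornerPt_mem_wordCell w _) hyw).trans hcell))

end PathConnected

section CoordinateUpdate

variable {ι : Type*} [DecidableEq ι]

def UpdateStable (G : Set (EuclideanSpace ℝ ι)) (i : ι) (f : ℝ → ℝ) : Prop :=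
  ∀ x ∈ G, WithLp.toLp 2 (Function.update x.ofLp i (f (x i))) ∈ G

namespace UpdateStable

variable {G : Set (EuclideanSpace ℝ ι)} {i : ι} {f g : ℝ → ℝ}

lemma id : UpdateStable G i id := fun x hx => by simpa using hx

lemma comp (hg : UpdateStable G i g) (hf : UpdateStable G i f) : UpdateStable G i (g ∘ f) :=
  fun x hx => by simpa using hg _ (hf x hx)

lemma ite (p : Prop) [Decidable p] (hf : UpdateStable G i f) :
    UpdateStable G i (if p then f else _root_.id) := by
  split_ifs
  exacts [hf, id]

lemma iInter {κ : Type*} {G : κ → Set (EuclideanSpace ℝ ι)} (hG : ∀ k, UpdateStable (G k) i f) :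
    UpdateStable (⋂ k, G k) i f :=
  fun x hx => Set.mem_iInter.mpr fun k => hG k x (Set.mem_iInter.mp hx k)

lemma map_mem [Fintype ι] {f : ι → ℝ → ℝ} (hf : ∀ i, UpdateStable G i (f i))
    {x : EuclideanSpace ℝ ι} (hx : x ∈ G) : WithLp.toLp 2 (fun i => f i (x i)) ∈ G := by
  suffices ∀ T : Finset ι, WithLp.toLp 2 (fun i => if i ∈ T then f i (x i) else x i) ∈ G by
    simpa using this Finset.univ
  intro T
  induction T using Finset.induction with
  | empty => simpa using hx
  | @insert i T hi ih =>
    convert hf i _ ih using 2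
    ext k
    by_cases hk : k = i
    · subst hk; simp [hi]
    · simp [hk]

end UpdateStable

lemma dist_toLp_update [Fintype ι] (x : EuclideanSpace ℝ ι) (i : ι) (t : ℝ) :
    dist x (WithLp.toLp 2 (Function.update x.ofLp i t)) = |x i - t| := by
  have : x - WithLp.toLp 2 (Function.update x.ofLp i t) = PiLp.single 2 i (x i - t) := by
    ext k
    by_cases hk : k = i
    · subst hk; simp
    · simp [hk]
  rw [dist_eq_norm, this, PiLp.norm_single, Real.norm_eq_abs]

end CoordinateUpdate

section Reflection

variable {d L : ℕ} {S : Set (Fin d → Fin L)}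

lemma digit_eq_zero_of_lt (hL : 0 < L) {m j : ℕ} {w : Fin m → Fin d → Fin L}
    {x : EuclideanSpace ℝ (Fin d)} (hx : x ∈ wordCell d L w) {i0 : Fin d}
    (hxj : x i0 < 1 / (L : ℝ) ^ j) {q : Fin m} (hq : (q : ℕ) < j) : (w q i0 : ℕ) = 0 := by
  by_contra hne
  have hdigit : 1 / (L : ℝ) ^ ((q : ℕ) + 1) ≤ (w q i0 : ℝ) / (L : ℝ) ^ ((q : ℕ) + 1) := by
    gcongr; exact_mod_cast Nat.one_le_iff_ne_zero.mpr hne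
  have hterm : (w q i0 : ℝ) / (L : ℝ) ^ ((q : ℕ) + 1) ≤ cellBase L w i0 :=
    Finset.single_le_sum (f := fun p : Fin m => (w p i0 : ℝ) / (L : ℝ) ^ ((p : ℕ) + 1))
      (fun _ _ => by positivity) (Finset.mem_univ q)
  have hlevel : 1 / (L : ℝ) ^ j ≤ 1 / (L : ℝ) ^ ((q : ℕ) + 1) := by
    gcongr
    · exact_mod_cast hL
    · exact hq
  linarith [(mem_wordCell_iff.mp hx i0).1]

lemma toLp_update_mem_wordCell {m : ℕ} {w w' : Fin m → Fin d → Fin L}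
    {x : EuclideanSpace ℝ (Fin d)} (hx : x ∈ wordCell d L w) {i0 : Fin d}
    (hother : ∀ i ≠ i0, cellBase L w' i = cellBase L w i) {t : ℝ}
    (ht : cellBase L w' i0 ≤ t ∧ t ≤ cellBase L w' i0 + 1 / (L : ℝ) ^ m) :
    WithLp.toLp 2 (Function.update x.ofLp i0 t) ∈ wordCell d L w' := by
  refine mem_wordCell_iff.mpr fun i => ?_
  by_cases hi : i = i0
  · subst hi; simpa using ht
  · simpa [Function.update_of_ne hi, hother i hi] using mem_wordCell_iff.mp hx i

/-- Reversing the digits of coordinate `i0` from level `j` on maps a cell whose first `j` digits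
in that coordinate vanish to its mirror image across `x_{i0} = L^{-j}/2`. -/
lemma IsGSC.toLp_update_reflect_mem (h : IsGSC d L S) {m j : ℕ} (hjm : j ≤ m)
    {w : Fin m → Fin d → Fin L} (hw : ∀ q, w q ∈ S) {x : EuclideanSpace ℝ (Fin d)}
    (hx : x ∈ wordCell d L w) {i0 : Fin d} (hlow : ∀ q : Fin m, (q : ℕ) < j → (w q i0 : ℕ) = 0) :
    WithLp.toLp 2 (Function.update x.ofLp i0 (1 / (L : ℝ) ^ j - x i0)) ∈ approxSet d L S m := by
  set w' : Fin m → Fin d → Fin L := fun q i => if i = i0 ∧ j ≤ (q : ℕ) then (w q i).rev else w q i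
  have hw' : ∀ q, w' q ∈ S := fun q => by
    simpa [w'] using h.rev_mem (fun i => decide (i = i0 ∧ j ≤ (q : ℕ))) (hw q)
  have hother : ∀ i ≠ i0, cellBase L w' i = cellBase L w i := fun i hi => by
    simp [cellBase, w', hi]
  have hsum : cellBase L w' i0 + cellBase L w i0 = 1 / (L : ℝ) ^ j - 1 / (L : ℝ) ^ m := by
    rw [← min_eq_left hjm, ← sum_geom_tail h.L_pos, cellBase, cellBase, ← Finset.sum_add_distrib]
    refine Finset.sum_congr rfl fun q _ => ?_
    by_cases hq : j ≤ (q : ℕ)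
    · simp only [w', hq, and_self, if_true, ← add_div, Fin.val_rev]
      congr 1
      have := (w q i0).isLt
      push_cast [Nat.cast_sub (by omega : (w q i0 : ℕ) + 1 ≤ L)]
      ring
    · simp [w', hq, hlow q (by omega)]
  obtain ⟨h1, h2⟩ := mem_wordCell_iff.mp hx i0
  exact Set.mem_biUnion hw' (toLp_update_mem_wordCell hx hother ⟨by linarith, by linarith⟩)

/-- Folding `[0, c/2]` onto `[c/2, c]`. -/
def foldLow (c t : ℝ) : ℝ := max t (c - t)

/-- Folding `[1 - c/2, 1]` onto `[1 - c, 1 - c/2]`. -/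
def foldHigh (c t : ℝ) : ℝ := min t (2 - c - t)

lemma foldHigh_eq_comp (c : ℝ) :
    foldHigh c = (fun t => 1 - t) ∘ foldLow c ∘ fun t => 1 - t := by
  funext t
  simp only [foldHigh, foldLow, Function.comp_apply, ← min_sub_sub_left]
  ring_nf

lemma IsGSC.updateStable_flip (h : IsGSC d L S) (m : ℕ) (i0 : Fin d) :
    UpdateStable (approxSet d L S m) i0 fun t => 1 - t := fun x hx => by
  obtain ⟨w, hw, hxw⟩ := Set.mem_iUnion₂.mp hx
  simpa using h.toLp_update_reflect_mem (Nat.zero_le m) hw hxw fun q hq => absurd hq (by omega)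

lemma IsGSC.updateStable_foldLow (h : IsGSC d L S) (m j : ℕ) (i0 : Fin d) :
    UpdateStable (approxSet d L S m) i0 (foldLow (1 / (L : ℝ) ^ j)) := fun x hx => by
  set c : ℝ := 1 / (L : ℝ) ^ j
  have hc : 0 < c := by have := h.L_pos; positivity
  rcases le_or_gt (x i0) (c / 2) with hxc | hxc
  · obtain ⟨w, hw, hxw⟩ := Set.mem_iUnion₂.mp hx
    have hlow : ∀ q : Fin m, (q : ℕ) < j → (w q i0 : ℕ) = 0 :=
      fun q hq => digit_eq_zero_of_lt h.L_pos hxw (by linarith) hq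
    rw [foldLow, max_eq_right (by linarith)]
    rcases le_total j m with hjm | hmj
    · exact h.toLp_update_reflect_mem hjm hw hxw hlow
    · -- the cell `w`, of side `L^{-m} ≥ c`, already contains the reflected point
      have hbase : cellBase L w i0 = 0 :=
        Finset.sum_eq_zero fun q _ => by simp [hlow q (by omega)]
      have hcm : c ≤ 1 / (L : ℝ) ^ m := one_div_le_one_div_of_le (by have := h.L_pos; positivity)
        (pow_le_pow_right₀ (by exact_mod_cast h.L_pos) hmj)
      obtain ⟨h1, -⟩ := mem_wordCell_iff.mp hxw i0
      exact Set.mem_biUnion hw (toLp_update_mem_wordCell hxw (fun _ _ => rfl)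
        ⟨by linarith, by linarith⟩)
  · rw [foldLow, max_eq_left (by linarith)]
    simpa using hx

lemma IsGSC.updateStable_foldHigh (h : IsGSC d L S) (m j : ℕ) (i0 : Fin d) :
    UpdateStable (approxSet d L S m) i0 (foldHigh (1 / (L : ℝ) ^ j)) := by
  rw [foldHigh_eq_comp]
  exact (h.updateStable_flip m i0).comp ((h.updateStable_foldLow m j i0).comp
    (h.updateStable_flip m i0))

end Reflection

section FaceRetraction

variable {d : ℕ}

lemma infDist_cubeFace {x : EuclideanSpace ℝ (Fin d)} (hx : ∀ i, 0 ≤ x i ∧ x i ≤ 1)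
    (p : Fin d × Bool) : infDist x (cubeFace d p) = |x p.1 - if p.2 then 1 else 0| := by
  set z := WithLp.toLp 2 (Function.update x.ofLp p.1 (if p.2 then 1 else 0))
  have hz : z ∈ cubeFace d p := by
    refine ⟨fun i => ?_, by simp [z]⟩
    by_cases hi : i = p.1
    · subst hi
      simp only [z, Function.update_self]
      split_ifs <;> norm_num
    · simpa [z, hi] using hx i
  refine le_antisymm (dist_toLp_update x p.1 _ ▸ infDist_le_dist_of_mem hz)
    ((le_infDist ⟨z, hz⟩).mpr fun y hy => ?_)
  rw [← hy.2, ← Real.dist_eq]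
  exact PiLp.dist_apply_le x y p.1

open Classical in
def cubeFold (I : Set (Fin d × Bool)) (c : ℝ) (i : Fin d) : ℝ → ℝ :=
  (if (i, true) ∈ I then foldHigh c else id) ∘ (if (i, false) ∈ I then foldLow c else id)

def faceRetraction (I : Set (Fin d × Bool)) (c : ℝ) (x : EuclideanSpace ℝ (Fin d)) :
    EuclideanSpace ℝ (Fin d) :=
  WithLp.toLp 2 fun i => cubeFold I c i (x i)

lemma continuous_faceRetraction (I : Set (Fin d × Bool)) (c : ℝ) :
    Continuous (faceRetraction I c) := by
  have hfold : ∀ i, Continuous (cubeFold I c i) := fun i => by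
    unfold cubeFold foldHigh foldLow
    split_ifs <;> fun_prop
  exact (PiLp.continuous_toLp 2 _).comp
    (continuous_pi fun i => (hfold i).comp ((continuous_apply i).comp (PiLp.continuous_ofLp 2 _)))

lemma cubeFold_eq_self {I : Set (Fin d × Bool)} {c : ℝ} {i : Fin d} {t : ℝ}
    (hlow : (i, false) ∈ I → c / 2 ≤ t) (hhigh : (i, true) ∈ I → t ≤ 1 - c / 2) :
    cubeFold I c i t = t := by
  have hl : (i, false) ∈ I → foldLow c t = t := fun hI => max_eq_left (by linarith [hlow hI])
  have hh : (i, true) ∈ I → foldHigh c t = t := fun hI => min_eq_left (by linarith [hhigh hI])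
  simp only [cubeFold, Function.comp_apply]
  split_ifs <;> simp [*]

lemma cubeFold_bounds {I : Set (Fin d × Bool)} {c : ℝ} (hc : c ≤ 2 / 3) (i : Fin d) {t : ℝ}
    (ht0 : 0 ≤ t) (ht1 : t ≤ 1) :
    (0 ≤ cubeFold I c i t ∧ cubeFold I c i t ≤ 1) ∧
      ((i, false) ∈ I → c / 2 ≤ cubeFold I c i t) ∧
      ((i, true) ∈ I → cubeFold I c i t ≤ 1 - c / 2) := by
  classical
  set t' := (if (i, false) ∈ I then foldLow c else id) t
  have ht' : (0 ≤ t' ∧ t' ≤ 1) ∧ ((i, false) ∈ I → c / 2 ≤ t') := by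
    simp only [t']
    split_ifs with hI
    · have := le_max_left t (c - t)
      have := le_max_right t (c - t)
      exact ⟨⟨by simp only [foldLow]; linarith, max_le ht1 (by linarith)⟩, fun _ => by
        simp only [foldLow]; linarith⟩
    · exact ⟨⟨ht0, ht1⟩, fun h => absurd h hI⟩
  obtain ⟨⟨ht'0, ht'1⟩, hlow⟩ := ht'
  rw [show cubeFold I c i t = (if (i, true) ∈ I then foldHigh c else id) t' from rfl]
  split_ifs with hI
  · simp only [foldHigh]
    have := min_le_left t' (2 - c - t')
    have := min_le_right t' (2 - c - t')
    exact ⟨⟨le_min ht'0 (by linarith), by linarith⟩, fun hI' => le_min (hlow hI') (by linarith),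
      fun _ => by linarith⟩
  · exact ⟨⟨ht'0, ht'1⟩, hlow, fun h => absurd h hI⟩

lemma abs_sub_face {t : ℝ} (ht0 : 0 ≤ t) (ht1 : t ≤ 1) (b : Bool) :
    |t - if b then 1 else 0| = if b then 1 - t else t := by
  cases b
  · simp [abs_of_nonneg ht0]
  · simp [abs_of_nonpos (by linarith : t - 1 ≤ 0)]

lemma diff_faceNbhds_eq_image {I : Set (Fin d × Bool)} {c : ℝ} (hc : c ≤ 2 / 3)
    {G : Set (EuclideanSpace ℝ (Fin d))} (hGcube : ∀ x ∈ G, ∀ i, 0 ≤ x i ∧ x i ≤ 1)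
    (hG : ∀ x ∈ G, faceRetraction I c x ∈ G) :
    G \ ⋃ p ∈ I, {x ∈ G | infDist x (cubeFace d p) < c / 2} = faceRetraction I c '' G := by
  ext x
  constructor
  · rintro ⟨hxG, hxI⟩
    have hfar : ∀ p ∈ I, c / 2 ≤ if p.2 then 1 - x p.1 else x p.1 := fun p hp => by
      rw [← abs_sub_face (hGcube x hxG p.1).1 (hGcube x hxG p.1).2, ← infDist_cubeFace
        (hGcube x hxG)]
      exact not_lt.mp fun hlt => hxI (Set.mem_biUnion hp ⟨hxG, hlt⟩)
    refine ⟨x, hxG, ?_⟩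
    ext i
    exact cubeFold_eq_self (by simpa using hfar (i, false)) fun hI => by
      linarith [show c / 2 ≤ 1 - x i by simpa using hfar (i, true) hI]
  · rintro ⟨y, hyG, rfl⟩
    have hb := fun i => cubeFold_bounds (I := I) hc i (hGcube y hyG i).1 (hGcube y hyG i).2
    refine ⟨hG y hyG, ?_⟩
    simp only [Set.mem_iUnion₂, not_exists]
    rintro ⟨i, b⟩ hp ⟨-, hlt⟩
    rw [infDist_cubeFace fun i => (hb i).1] at hlt
    rw [show (faceRetraction I c y) i = cubeFold I c i (y i) from rfl,
      abs_sub_face (hb i).1.1 (hb i).1.2] at hlt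
    cases b
    · exact absurd ((hb i).2.1 hp) (not_le.mpr hlt)
    · exact absurd ((hb i).2.2 hp) (by simp only [if_true] at hlt; linarith)

end FaceRetraction

section Main

variable {d L : ℕ} {S : Set (Fin d → Fin L)}

lemma IsGSC.one_div_pow_le (h : IsGSC d L S) {j : ℕ} (hj : 1 ≤ j) : 1 / (L : ℝ) ^ j ≤ 2 / 3 := by
  have hL : (3 : ℝ) ≤ L := by exact_mod_cast h.hL
  have : (3 : ℝ) ≤ (L : ℝ) ^ j := hL.trans (le_self_pow₀ (by linarith) (by omega))
  rw [div_le_div_iff₀ (by linarith) (by norm_num)]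
  linarith

lemma IsGSC.updateStable_cubeFold (h : IsGSC d L S) (I : Set (Fin d × Bool)) (m j : ℕ)
    (i : Fin d) : UpdateStable (approxSet d L S m) i (cubeFold I (1 / (L : ℝ) ^ j) i) := by
  classical
  exact (UpdateStable.ite _ (h.updateStable_foldHigh m j i)).comp
    (UpdateStable.ite _ (h.updateStable_foldLow m j i))

lemma IsGSC.faceRetraction_mem_approxSet (h : IsGSC d L S) (I : Set (Fin d × Bool)) (j m : ℕ)
    {x : EuclideanSpace ℝ (Fin d)} (hx : x ∈ approxSet d L S m) :
    faceRetraction I (1 / (L : ℝ) ^ j) x ∈ approxSet d L S m :=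
  UpdateStable.map_mem (h.updateStable_cubeFold I m j) hx

lemma IsGSC.faceRetraction_mem_carpetSet (h : IsGSC d L S) (I : Set (Fin d × Bool)) (j : ℕ)
    {x : EuclideanSpace ℝ (Fin d)} (hx : x ∈ carpetSet d L S) :
    faceRetraction I (1 / (L : ℝ) ^ j) x ∈ carpetSet d L S :=
  UpdateStable.map_mem (fun i => UpdateStable.iInter fun m => h.updateStable_cubeFold I m j i) hx

end Main

/-- Let `F` be a generalized Sierpiński carpet and `F_m` its level-`m`
approximation domains. For `j ≥ 1` and a set `I` of index pairs `(i,s)`, removing from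
`F` (resp. `F_m`) the open `L^{-j}/2`-neighborhoods of the faces `∂_{i,s}F₀`, `(i,s) ∈ I`,
leaves a path-connected set. -/
theorem carpet_minus_face_neighborhoods_pathConnected
    (d L : ℕ) (S : Set (Fin d → Fin L)) (h : IsGSC d L S)
    (j : ℕ) (hj : 1 ≤ j) (I : Set (Fin d × Bool)) :
    IsPathConnected
      (carpetSet d L S \
        ⋃ p ∈ I, {x ∈ carpetSet d L S |
          Metric.infDist x (cubeFace d p) < 1 / (2 * (L : ℝ) ^ j)}) ∧
    ∀ m : ℕ, IsPathConnected
      (approxSet d L S m \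
        ⋃ p ∈ I, {x ∈ approxSet d L S m |
          Metric.infDist x (cubeFace d p) < 1 / (2 * (L : ℝ) ^ j)}) := by
  have hc := h.one_div_pow_le hj
  have hr : 1 / (2 * (L : ℝ) ^ j) = 1 / (L : ℝ) ^ j / 2 := by ring
  rw [hr]
  refine ⟨?_, fun m => ?_⟩
  · rw [diff_faceNbhds_eq_image hc (fun x hx => mem_unitCube_of_mem_approxSet h.L_pos
      (carpetSet_subset_approxSet 0 hx)) fun x => h.faceRetraction_mem_carpetSet I j]
    exact h.isPathConnected_carpetSet.image (continuous_faceRetraction I _)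
  · rw [diff_faceNbhds_eq_image hc (fun x => mem_unitCube_of_mem_approxSet h.L_pos)
      fun x => h.faceRetraction_mem_approxSet I j m]
    exact (h.isPathConnected_approxSet m).image (continuous_faceRetraction I _)
end
end
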